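/- arXiv:1810.00716 — 7 statements merged into one kernel-verified Lean document; each statement's English description precedes it below -/
import Mathlib

section
/- Let F be a field of characteristic zero, let d ≥ 1 and k ≥ 1 be integers, and let P = (p_1^{n_1}, …, p_t^{n_t}) be a partition written in power form having diagonal lengths T(d,k). If P is a complete intersection Jordan type for (d,k) over F, then p_{i−1} ≥ n_{i−1} + n_i + p_i for every 2 ≤ i ≤ t. -/
/-!
The number of Jordan blocks of multiplication by `ℓ` is `dim A/ℓA = dim F[x,y]/(f,g,ℓ)`.
Restricting to the line `ℓ = 0` identifies this ring with `F[z]/(u z^d, v z^(d+k-1))`, so `P`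
has `d` or `d+k-1` parts. For such a partition, the diagonal lengths `T(d,k)` force the number of
rows `r` with `p_r + r > i` to drop by at most one when `i` increases, so the numbers `p_r + r`
are pairwise distinct. On two adjacent blocks `p_(i-1)^(n_(i-1)), p_i^(n_i)` these numbers fill
intervals of lengths `n_(i-1)` and `n_i`, which are disjoint only if
`p_(i-1) ≥ n_(i-1) + n_i + p_i`.
-/

open MvPolynomial

/-- A partition, represented as a decreasingly sorted list of positive integers. -/
def IsPartitionList (P : List ℕ) : Prop :=
  P.Pairwise (· ≥ ·) ∧ ∀ p ∈ P, 0 < p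

/-- `P` is the Jordan type of the `F`-linear endomorphism `u`:
for every `m ≥ 1`, the number of parts of `P` that are at least `m` equals
`dim (range u^(m-1)) - dim (range u^m)`. -/
def IsJordanTypeOf (F : Type) [Field F] {A : Type} [AddCommGroup A] [Module F A]
    (P : List ℕ) (u : A →ₗ[F] A) : Prop :=
  ∀ m : ℕ, 1 ≤ m →
    (P.filter (fun p => m ≤ p)).length =
      Module.finrank F (LinearMap.range (u ^ (m - 1))) -
        Module.finrank F (LinearMap.range (u ^ m))

/-- The `i`-th diagonal length of a partition `P`: the number of pairs `(r, c)`
with `r + c = i` and `c < p_(r+1)`. -/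
def diagLen (P : List ℕ) (i : ℕ) : ℕ :=
  ((Finset.range (i + 1)).filter (fun r => i - r < P.getD r 0)).card

/-- The complete intersection Hilbert function `T(d,k)`. -/
def Tdk (d k i : ℕ) : ℕ :=
  if i ≤ 2 * d + k - 3 then min (min (i + 1) d) (2 * d + k - 2 - i) else 0

/-- Multiplication by (the class of) `h` on the quotient `F[x,y]/I`, as an `F`-linear map. -/
noncomputable def mulMap (F : Type) [Field F] (I : Ideal (MvPolynomial (Fin 2) F))
    (h : MvPolynomial (Fin 2) F) :
    (MvPolynomial (Fin 2) F ⧸ I) →ₗ[F] (MvPolynomial (Fin 2) F ⧸ I) :=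
  Algebra.lmul F (MvPolynomial (Fin 2) F ⧸ I) (Ideal.Quotient.mk I h)

/-- `P` is a complete intersection Jordan type for `(d, k)` over `F`. -/
def IsCIJT (F : Type) [Field F] (d k : ℕ) (P : List ℕ) : Prop :=
  ∃ f g ℓ : MvPolynomial (Fin 2) F,
    f.IsHomogeneous d ∧ g.IsHomogeneous (d + k - 1) ∧
    ℓ.IsHomogeneous 1 ∧ ℓ ≠ 0 ∧
    FiniteDimensional F (MvPolynomial (Fin 2) F ⧸ Ideal.span {f, g}) ∧
    IsJordanTypeOf F P (mulMap F (Ideal.span {f, g}) ℓ)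

/-- The degree-`i` graded component of `F[x,y]/I`. -/
noncomputable def gradedPiece (F : Type) [Field F] (I : Ideal (MvPolynomial (Fin 2) F)) (i : ℕ) :
    Submodule F (MvPolynomial (Fin 2) F ⧸ I) :=
  (MvPolynomial.homogeneousSubmodule (Fin 2) F i).map (Ideal.Quotient.mkₐ F I).toLinearMap

/-- The rank of the `i`-th Hessian at `ℓ`: the dimension of `ℓ̄^(j-2i) · A_i`. -/
noncomputable def hessRank (F : Type) [Field F] (I : Ideal (MvPolynomial (Fin 2) F))
    (ℓ : MvPolynomial (Fin 2) F) (j i : ℕ) : ℕ :=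
  Module.finrank F
    ((gradedPiece F I i).map (mulMap F I (ℓ ^ (j - 2 * i))))

/-- The partition `(p_1^{n_1}, …, p_t^{n_t})` in power form, as a list. -/
def powerList (t : ℕ) (p n : Fin t → ℕ) : List ℕ :=
  (List.ofFn fun i => List.replicate (n i) (p i)).flatten

/-- The CI criterion for a partition `P`: writing `P` in power form
`(p_1^{n_1}, …, p_t^{n_t})` with `p_1 > ⋯ > p_t`, for every `2 ≤ i ≤ t` one has
`p_(i-1) = n_(i-1) + n_i + p_i`.  Phrased intrinsically: for any two adjacent
part sizes `a > b` of `P`, `a = (count of a) + (count of b) + b`. -/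
def CICriterion (P : List ℕ) : Prop :=
  ∀ a b : ℕ, a ∈ P → b ∈ P → b < a → (∀ x ∈ P, x ≤ b ∨ a ≤ x) →
    a = P.count a + P.count b + b

/-- The CIJT partition `(p_1^{n_1}, …, p_c^{n_c}, (d-n)^{d-n+k-1})` built from a
list `L = [n_1, …, n_c]` of positive integers with sum `n`, where
`p_i = k - 1 + 2d - n_i - 2(n_1 + ⋯ + n_(i-1))`; the trailing block is empty
when `n = d`. -/
def ciList (d k : ℕ) (L : List ℕ) : List ℕ :=
  (List.ofFn fun i : Fin L.length =>
      List.replicate (L.get i) (k - 1 + 2 * d - L.get i - 2 * (L.take i).sum)).flatten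
    ++ (if L.sum = d then [] else List.replicate (d - L.sum + k - 1) (d - L.sum))


section LinearForms

open Module

variable {F : Type*} [Field F]

lemma MvPolynomial.IsHomogeneous.exists_sum_smul_X_eq {σ : Type*} [Fintype σ]
    {ℓ : MvPolynomial σ F} (h : ℓ.IsHomogeneous 1) : ∃ a : σ → F, ∑ i, a i • X i = ℓ := by
  have := (mem_homogeneousSubmodule 1 ℓ).mpr h
  rwa [homogeneousSubmodule_one_eq_span_X, Submodule.mem_span_range_iff_exists_fun] at this

lemma MvPolynomial.IsHomogeneous.exists_eq_C_mul_X_sub_C_mul_X {ℓ : MvPolynomial (Fin 2) F}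
    (h : ℓ.IsHomogeneous 1) (h0 : ℓ ≠ 0) :
    ∃ c : Fin 2 → F, c ≠ 0 ∧ ℓ = C (c 1) * X 0 - C (c 0) * X 1 := by
  obtain ⟨a, rfl⟩ := h.exists_sum_smul_X_eq
  refine ⟨![-a 1, a 0], fun hc => h0 ?_, ?_⟩
  · have h0 := congr_fun hc 0
    have h1 := congr_fun hc 1
    simp_all
  · simp [Fin.sum_univ_two, smul_eq_C_mul]

noncomputable def restrictToLine {σ : Type*} (c : σ → F) : MvPolynomial σ F →ₐ[F] Polynomial F :=
  aeval fun i => Polynomial.C (c i) * Polynomial.X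

lemma MvPolynomial.IsHomogeneous.restrictToLine_eq {σ : Type*} [Fintype σ] {q : MvPolynomial σ F}
    {m : ℕ} (hq : q.IsHomogeneous m) (c : σ → F) :
    restrictToLine c q = Polynomial.C (eval c q) * Polynomial.X ^ m := by
  rw [restrictToLine, aeval_def, eval₂_eq', eval_eq', map_sum, Finset.sum_mul]
  refine Finset.sum_congr rfl fun u hu => ?_
  have hdeg : ∑ i, u i = m := by
    rw [← Finsupp.degree_eq_sum, ← hq (mem_support_iff.mp hu), Finsupp.degree_eq_weight_one]
    rfl
  simp_rw [mul_pow, Finset.prod_mul_distrib, Finset.prod_pow_eq_pow_sum, hdeg, map_mul, map_prod,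
    map_pow, Polynomial.algebraMap_eq, mul_assoc]

lemma ker_restrictToLine {c : Fin 2 → F} (hc : c ≠ 0) :
    RingHom.ker (restrictToLine c) = Ideal.span {C (c 1) * X 0 - C (c 0) * X 1} := by
  set ℓ : MvPolynomial (Fin 2) F := C (c 1) * X 0 - C (c 0) * X 1
  refine le_antisymm ?_ ((Ideal.span_singleton_le_iff_mem _).mpr ?_)
  · obtain ⟨j, hj⟩ := Function.ne_iff.mp hc
    have hmem : ∀ i, C (c j) * X i - C (c i) * X j ∈ Ideal.span {ℓ} := by
      intro i
      rw [Ideal.mem_span_singleton']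
      fin_cases i <;> fin_cases j
      exacts [⟨0, by simp⟩, ⟨1, by simp [ℓ]⟩, ⟨-1, by simp [ℓ]⟩, ⟨0, by simp⟩]
    -- `z ↦ x_j / c_j` is a section of `restrictToLine c` modulo `ℓ`
    have hsection : ((Ideal.Quotient.mkₐ F (Ideal.span {ℓ})).comp
        ((Polynomial.aeval (C (c j)⁻¹ * X j)).comp (restrictToLine c))) =
        Ideal.Quotient.mkₐ F (Ideal.span {ℓ}) := by
      refine MvPolynomial.algHom_ext fun i => ?_
      rw [eq_comm, AlgHom.comp_apply, AlgHom.comp_apply, Ideal.Quotient.mkₐ_eq_mk,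
        Ideal.Quotient.eq]
      convert Ideal.mul_mem_left _ (C (c j)⁻¹) (hmem i) using 1
      simp only [restrictToLine, aeval_X, map_mul, Polynomial.aeval_C, Polynomial.aeval_X,
        MvPolynomial.algebraMap_eq]
      have hC : C (c j)⁻¹ * C (c j) = (1 : MvPolynomial (Fin 2) F) := by
        rw [← C_mul, inv_mul_cancel₀ hj, C_1]
      linear_combination -X i * hC
    intro q hq
    rw [← Ideal.Quotient.eq_zero_iff_mem, ← Ideal.Quotient.mkₐ_eq_mk F, ← hsection,
      AlgHom.comp_apply, AlgHom.comp_apply, RingHom.mem_ker.mp hq, map_zero, map_zero]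
  · simp only [ℓ, RingHom.mem_ker, restrictToLine, map_sub, map_mul, aeval_X, aeval_C,
      Polynomial.algebraMap_eq]
    ring

lemma restrictToLine_surjective {c : Fin 2 → F} (hc : c ≠ 0) :
    Function.Surjective (restrictToLine c) := by
  obtain ⟨j, hj⟩ := Function.ne_iff.mp hc
  have hsection :
      (restrictToLine c).comp (Polynomial.aeval (C (c j)⁻¹ * X j)) = AlgHom.id F _ := by
    refine Polynomial.algHom_ext ?_
    simp only [AlgHom.comp_apply, Polynomial.aeval_X, map_mul, restrictToLine, aeval_X, aeval_C,
      Polynomial.algebraMap_eq, AlgHom.id_apply, ← mul_assoc, ← Polynomial.C_mul,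
      inv_mul_cancel₀ hj, Polynomial.C_1, one_mul]
  exact fun w => ⟨_, congr($hsection w)⟩

noncomputable def quotientEquivMapOfSurjective {R A B : Type*} [CommRing R] [CommRing A]
    [CommRing B] [Algebra R A] [Algebra R B] (φ : A →ₐ[R] B) (hφ : Function.Surjective φ)
    {J : Ideal A} (hJ : RingHom.ker φ ≤ J) : (A ⧸ J) ≃ₐ[R] B ⧸ J.map φ :=
  AlgEquiv.ofBijective (Ideal.quotientMapₐ _ φ Ideal.le_comap_map)
    ⟨Ideal.quotientMap_injective' (H := Ideal.le_comap_map)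
      ((Ideal.comap_map_of_surjective' (φ : A →+* B) hφ J).trans_le (sup_le le_rfl hJ)),
      Ideal.quotientMap_surjective (H := Ideal.le_comap_map) hφ⟩

lemma finrank_quotient_span_C_mul_X_pow_pair {d e : ℕ} (u v : F)
    (hfin : FiniteDimensional F (Polynomial F ⧸
      Ideal.span {Polynomial.C u * Polynomial.X ^ d, Polynomial.C v * Polynomial.X ^ e})) :
    finrank F (Polynomial F ⧸
        Ideal.span {Polynomial.C u * Polynomial.X ^ d, Polynomial.C v * Polynomial.X ^ e}) = d ∨
      finrank F (Polynomial F ⧸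
        Ideal.span {Polynomial.C u * Polynomial.X ^ d, Polynomial.C v * Polynomial.X ^ e}) = e := by
  wlog hde : d ≤ e generalizing d e u v
  · rw [Set.pair_comm] at hfin ⊢
    exact (this v u hfin (by omega)).symm
  by_cases hu : u = 0
  · subst hu
    rw [map_zero, zero_mul, Ideal.span_insert_zero] at hfin ⊢
    by_cases hv : v = 0
    · subst hv
      rw [map_zero, zero_mul] at hfin
      exact absurd (Module.Finite.equiv ((Submodule.quotEquivOfEqBot _
        (Ideal.span_singleton_eq_bot.mpr rfl)).restrictScalars F)) Polynomial.not_finite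
    · rw [finrank_quotient_span_eq_natDegree, Polynomial.natDegree_C_mul_X_pow e v hv]
      exact Or.inr rfl
  · have hspan : Ideal.span {Polynomial.C u * Polynomial.X ^ d, Polynomial.C v * Polynomial.X ^ e} =
        Ideal.span {Polynomial.X ^ d} := by
      rw [Ideal.span_insert,
        Ideal.span_singleton_mul_left_unit (Polynomial.isUnit_C.mpr (isUnit_iff_ne_zero.mpr hu)),
        sup_eq_left, Ideal.span_singleton_le_span_singleton]
      exact dvd_mul_of_dvd_right (pow_dvd_pow _ hde) _
    rw [hspan, finrank_quotient_span_eq_natDegree, Polynomial.natDegree_X_pow]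
    exact Or.inl rfl

theorem finrank_quotient_sup_span_of_isHomogeneous {d e : ℕ} {f g ℓ : MvPolynomial (Fin 2) F}
    (hf : f.IsHomogeneous d) (hg : g.IsHomogeneous e) (hℓ : ℓ.IsHomogeneous 1) (hℓ0 : ℓ ≠ 0)
    [FiniteDimensional F (MvPolynomial (Fin 2) F ⧸ (Ideal.span {f, g} ⊔ Ideal.span {ℓ}))] :
    finrank F (MvPolynomial (Fin 2) F ⧸ (Ideal.span {f, g} ⊔ Ideal.span {ℓ})) = d ∨
      finrank F (MvPolynomial (Fin 2) F ⧸ (Ideal.span {f, g} ⊔ Ideal.span {ℓ})) = e := by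
  obtain ⟨c, hc, rfl⟩ := hℓ.exists_eq_C_mul_X_sub_C_mul_X hℓ0
  have hker := ker_restrictToLine hc
  let eqv := quotientEquivMapOfSurjective (restrictToLine c) (restrictToLine_surjective hc)
    (J := Ideal.span {f, g} ⊔ Ideal.span {C (c 1) * X 0 - C (c 0) * X 1}) (hker ▸ le_sup_right)
  have hℓc : restrictToLine c (C (c 1) * X 0 - C (c 0) * X 1) = 0 := by
    rw [← RingHom.mem_ker, hker]
    exact Ideal.mem_span_singleton_self _
  have hmap : (Ideal.span {f, g} ⊔ Ideal.span {C (c 1) * X 0 - C (c 0) * X 1}).map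
      (restrictToLine c) = Ideal.span {Polynomial.C (eval c f) * Polynomial.X ^ d,
        Polynomial.C (eval c g) * Polynomial.X ^ e} := by
    rw [Ideal.map_sup, Ideal.map_span, Ideal.map_span, Set.image_pair, Set.image_singleton, hℓc,
      hf.restrictToLine_eq, hg.restrictToLine_eq, Ideal.span_singleton_eq_bot.mpr rfl, sup_bot_eq]
  have := Module.Finite.equiv eqv.toLinearEquiv
  rw [eqv.toLinearEquiv.finrank_eq, hmap] at *
  exact finrank_quotient_span_C_mul_X_pow_pair _ _ this

end LinearForms

section JordanType

open Module

lemma IsJordanTypeOf.length_eq_finrank_quotient_range {F : Type} [Field F] {A : Type}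
    [AddCommGroup A] [Module F A] [FiniteDimensional F A] {P : List ℕ} {u : A →ₗ[F] A}
    (hP : IsJordanTypeOf F P u) (hpos : ∀ p ∈ P, 0 < p) :
    P.length = finrank F (A ⧸ LinearMap.range u) := by
  have h1 := hP 1 le_rfl
  rw [List.filter_eq_self.mpr fun p hp => decide_eq_true (Nat.one_le_of_lt (hpos p hp)), pow_zero,
    pow_one, Module.End.one_eq_id, LinearMap.range_id, finrank_top] at h1
  rw [h1, ← (LinearMap.range u).finrank_quotient_add_finrank]
  omega

lemma range_mulMap {F : Type} [Field F] (I : Ideal (MvPolynomial (Fin 2) F))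
    (ℓ : MvPolynomial (Fin 2) F) :
    LinearMap.range (mulMap F I ℓ) =
      ((Ideal.span {ℓ}).map (Ideal.Quotient.mkₐ F I)).restrictScalars F := by
  ext x
  simp [mulMap, Ideal.map_span, Ideal.mem_span_singleton']

noncomputable def quotientRangeMulMapEquiv {F : Type} [Field F]
    (I : Ideal (MvPolynomial (Fin 2) F)) (ℓ : MvPolynomial (Fin 2) F) :
    ((MvPolynomial (Fin 2) F ⧸ I) ⧸ LinearMap.range (mulMap F I ℓ)) ≃ₗ[F]
      MvPolynomial (Fin 2) F ⧸ (I ⊔ Ideal.span {ℓ}) :=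
  (Submodule.quotEquivOfEq _ _ (range_mulMap I ℓ)).trans
    ((Submodule.Quotient.restrictScalarsEquiv F _).trans
      (DoubleQuot.quotQuotEquivQuotSupₐ F I (Ideal.span {ℓ})).toLinearEquiv)

theorem IsCIJT.length_eq {F : Type} [Field F] {d k : ℕ} {P : List ℕ} (hP : IsCIJT F d k P)
    (hpos : ∀ p ∈ P, 0 < p) : P.length = d ∨ P.length = d + k - 1 := by
  obtain ⟨f, g, ℓ, hf, hg, hℓ, hℓ0, hfin, hJT⟩ := hP
  have e := quotientRangeMulMapEquiv (Ideal.span {f, g}) ℓ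
  have := Module.Finite.equiv e
  rw [hJT.length_eq_finrank_quotient_range hpos, e.finrank_eq]
  exact finrank_quotient_sup_span_of_isHomogeneous hf hg hℓ hℓ0

end JordanType

section Diagonals

/-- The rows `r` of `P` that have a box on a diagonal `≥ i`. -/
def rowsReaching (P : List ℕ) (i : ℕ) : Finset ℕ :=
  (Finset.range P.length).filter fun r => i < P.getD r 0 + r

variable {P : List ℕ}

lemma getD_pos_of_forall_pos (hpos : ∀ p ∈ P, 0 < p) {r : ℕ} (hr : r < P.length) :
    0 < P.getD r 0 := by
  rw [List.getD_eq_getElem P 0 hr]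
  exact hpos _ (List.getElem_mem hr)

lemma card_rowsReaching (hpos : ∀ p ∈ P, 0 < p) (i : ℕ) :
    (rowsReaching P i).card = diagLen P i + (P.length - (i + 1)) := by
  rw [← Finset.card_filter_add_card_filter_not (fun r => r ≤ i)]
  congr 1
  · unfold diagLen
    congr 1
    ext r
    simp only [rowsReaching, Finset.mem_filter, Finset.mem_range]
    by_cases hr : r < P.length
    · omega
    · rw [List.getD_eq_default _ _ (by omega)]
      omega
  · rw [← Nat.card_Ico]
    congr 1
    ext r
    simp only [rowsReaching, Finset.mem_filter, Finset.mem_range, Finset.mem_Ico]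
    constructor
    · omega
    · intro hr
      have := getD_pos_of_forall_pos hpos hr.2
      omega

lemma card_rowsReaching_le_succ {d k : ℕ} (hpos : ∀ p ∈ P, 0 < p)
    (hdiag : ∀ i, diagLen P i = Tdk d k i) (hlen : P.length = d ∨ P.length = d + k - 1)
    (i : ℕ) : (rowsReaching P i).card ≤ (rowsReaching P (i + 1)).card + 1 := by
  rw [card_rowsReaching hpos, card_rowsReaching hpos, hdiag, hdiag]
  unfold Tdk
  split_ifs <;> omega

lemma injOn_getD_add_of_card_rowsReaching_le_succ
    (hstep : ∀ i, (rowsReaching P i).card ≤ (rowsReaching P (i + 1)).card + 1) :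
    Set.InjOn (fun r => P.getD r 0 + r) (Set.Iio P.length) := by
  intro r hr r' hr' (hv : P.getD r 0 + r = P.getD r' 0 + r')
  by_contra hne
  set v := P.getD r 0 + r
  have hv0 : v ≠ 0 := by omega
  have hdisj : Disjoint {r, r'} (rowsReaching P v) := by
    simp only [Finset.disjoint_insert_left, Finset.disjoint_singleton_left, rowsReaching,
      Finset.mem_filter]
    omega
  have hsub : {r, r'} ∪ rowsReaching P v ⊆ rowsReaching P (v - 1) := by
    intro s hs
    simp only [Finset.mem_union, Finset.mem_insert, Finset.mem_singleton] at hs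
    simp only [rowsReaching, Finset.mem_filter, Finset.mem_range] at hs ⊢
    rcases hs with (rfl | rfl) | hs <;> simp only [Set.mem_Iio] at hr hr' <;> omega
  have hcard := Finset.card_le_card hsub
  rw [Finset.card_union_of_disjoint hdisj, Finset.card_pair hne] at hcard
  have := hstep (v - 1)
  rw [Nat.sub_add_cancel (Nat.one_le_iff_ne_zero.mpr hv0)] at this
  omega

lemma getD_append_replicate_append {L₁ L₂ : List ℕ} {m x c : ℕ} (hc : c < m) :
    (L₁ ++ List.replicate m x ++ L₂).getD (L₁.length + c) 0 = x := by
  rw [List.append_assoc, List.getD_append_right _ _ _ _ (by omega), Nat.add_sub_cancel_left,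
    List.getD_append _ _ _ _ (by simpa using hc)]
  exact List.getD_replicate x hc

lemma add_add_le_of_injOn_getD_add {P L₁ L₂ : List ℕ} {m m' x y : ℕ}
    (hP : P = L₁ ++ List.replicate m x ++ List.replicate m' y ++ L₂) (hyx : y < x) (hm : 0 < m)
    (hm' : 0 < m') (hinj : Set.InjOn (fun r => P.getD r 0 + r) (Set.Iio P.length)) :
    m + m' + y ≤ x := by
  subst hP
  by_contra! hlt
  -- a value `v` taken in both blocks: `v = x + c = y + m + c'` with `c < m`, `c' < m'`
  set v := max x (y + m)
  have hx : (L₁ ++ List.replicate m x ++ List.replicate m' y ++ L₂).getD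
      (L₁.length + (v - x)) 0 = x := by
    rw [List.append_assoc _ (List.replicate m' y)]
    exact getD_append_replicate_append (by omega)
  have hy : (L₁ ++ List.replicate m x ++ List.replicate m' y ++ L₂).getD
      ((L₁ ++ List.replicate m x).length + (v - y - m)) 0 = y :=
    getD_append_replicate_append (by omega)
  rw [List.length_append, List.length_replicate] at hy
  have := hinj (x₁ := L₁.length + (v - x)) (x₂ := L₁.length + m + (v - y - m))
    (by simp only [Set.mem_Iio, List.length_append, List.length_replicate]; omega)
    (by simp only [Set.mem_Iio, List.length_append, List.length_replicate]; omega)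
    (by simp only [hx, hy]; omega)
  omega

lemma powerList_eq_append {t : ℕ} (p n : Fin t → ℕ) {i : ℕ} (hi : i + 1 < t) :
    ∃ L₁ L₂, powerList t p n = L₁ ++ List.replicate (n ⟨i, by omega⟩) (p ⟨i, by omega⟩) ++
      List.replicate (n ⟨i + 1, hi⟩) (p ⟨i + 1, hi⟩) ++ L₂ := by
  set B := List.ofFn fun j => List.replicate (n j) (p j)
  refine ⟨(B.take i).flatten, (B.drop (i + 2)).flatten, ?_⟩
  change B.flatten = _
  conv_lhs => rw [← List.take_append_drop i B, List.drop_eq_getElem_cons (by simp [B]; omega),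
    List.drop_eq_getElem_cons (by simp [B]; omega)]
  simp [B]

end Diagonals

lemma forall_mem_powerList_pos {t : ℕ} {p : Fin t → ℕ} (n : Fin t → ℕ) (hppos : ∀ i, 0 < p i) :
    ∀ x ∈ powerList t p n, 0 < x := by
  intro x hx
  simp only [powerList, List.mem_flatten, List.mem_ofFn] at hx
  obtain ⟨_, ⟨i, rfl⟩, hx⟩ := hx
  rw [List.eq_of_mem_replicate hx]
  exact hppos i

theorem stmt_2_general (F : Type) [Field F] (d k : ℕ)
    (t : ℕ) (p n : Fin t → ℕ)
    (hp : ∀ i j : Fin t, i < j → p j < p i)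
    (hppos : ∀ i : Fin t, 0 < p i) (hnpos : ∀ i : Fin t, 0 < n i)
    (hdiag : ∀ i : ℕ, diagLen (powerList t p n) i = Tdk d k i)
    (hCI : IsCIJT F d k (powerList t p n)) :
    ∀ i : ℕ, ∀ h : i + 1 < t,
      n ⟨i, Nat.lt_of_succ_lt h⟩ + n ⟨i + 1, h⟩ + p ⟨i + 1, h⟩ ≤
        p ⟨i, Nat.lt_of_succ_lt h⟩ := by
  intro i hi
  have hpos := forall_mem_powerList_pos n hppos
  have hinj := injOn_getD_add_of_card_rowsReaching_le_succ
    (card_rowsReaching_le_succ hpos hdiag (hCI.length_eq hpos))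
  obtain ⟨L₁, L₂, hP⟩ := powerList_eq_append p n hi
  exact add_add_le_of_injOn_getD_add hP (hp _ _ (Fin.mk_lt_mk.mpr i.lt_succ_self)) (hnpos _)
    (hnpos _) hinj

/-- necessary criterion for CIJT. If a partition
`P = (p_1^{n_1}, …, p_t^{n_t})` of diagonal lengths `T(d,k)` has complete
intersection Jordan type, then `p_(i-1) ≥ n_(i-1) + n_i + p_i` for `2 ≤ i ≤ t`
(zero-based indices here). -/
theorem stmt_2 (F : Type) [Field F] [CharZero F] (d k : ℕ) (hd : 1 ≤ d) (hk : 1 ≤ k)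
    (t : ℕ) (p n : Fin t → ℕ)
    (hp : ∀ i j : Fin t, i < j → p j < p i)
    (hppos : ∀ i : Fin t, 0 < p i) (hnpos : ∀ i : Fin t, 0 < n i)
    (hdiag : ∀ i : ℕ, diagLen (powerList t p n) i = Tdk d k i)
    (hCI : IsCIJT F d k (powerList t p n)) :
    ∀ i : ℕ, ∀ h : i + 1 < t,
      n ⟨i, Nat.lt_of_succ_lt h⟩ + n ⟨i + 1, h⟩ + p ⟨i + 1, h⟩ ≤
        p ⟨i, Nat.lt_of_succ_lt h⟩ :=
  stmt_2_general F d k t p n hp hppos hnpos hdiag hCI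
end

section
/- Let d ≥ 1 and let b : {0,1,…,d} → {0,1,…,d} be a bijection, and let e be the unique index with b(e) = 0. Then b(i+1) ≤ b(i) + 1 holds for every 0 ≤ i ≤ d−1 with i ≠ e if and only if the list (b(0), b(1), …, b(d)) can be written as a concatenation v_1 ++ ⋯ ++ v_a ++ [0] ++ h_1 ++ ⋯ ++ h_c (with a ≥ 0 and c ≥ 0, either group possibly empty) in which each v_r and each h_r is a nonempty list of consecutive increasing integers of the form [m, m+1, …, M], the sets of entries of these lists are pairwise disjoint and their union is {1, …, d}, the minima of v_1, …, v_a are strictly decreasing, and the maxima of h_1, …, h_c are strictly decreasing. -/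
/-!
Cut the word at its `0`. On either side every step is at most `+1`, so splitting a side into its
maximal runs of consecutive integers, two adjacent runs are disjoint intervals (the entries are
distinct) and the later one starts no later than the earlier one ends; it cannot start inside
the earlier interval, so it lies entirely below it, and both the minima and the maxima of the
runs decrease. Conversely, if either the minima or the maxima decrease, each run starts no
later than the previous one ends, so every step of the word is at most `+1`.
-/

open MvPolynomial

/-- A "run": a nonempty list of consecutive increasing integers `[m, m+1, …, m+len-1]`. -/
def IsRun (l : List ℕ) : Prop := ∃ m len : ℕ, 0 < len ∧ l = List.range' m len

open List

lemma List.headI_range'_succ (m n : ℕ) : (range' m (n + 1)).headI = m := by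
  simp [range'_succ]

lemma List.head?_range'_succ (m n : ℕ) : (range' m (n + 1)).head? = some m := rfl

lemma List.getLast?_range'_succ (m n : ℕ) : (range' m (n + 1)).getLast? = some (m + n) := by
  simp [getLast?_range']

lemma List.getLastD_range'_succ (m n : ℕ) : (range' m (n + 1)).getLastD 0 = m + n := by
  simp [getLastD_eq_getLast?, getLast?_range']

lemma isRun_iff_exists_range' {l : List ℕ} : IsRun l ↔ ∃ m n, l = range' m (n + 1) := by
  constructor
  · rintro ⟨m, len, hlen, rfl⟩
    exact ⟨m, len - 1, by rw [Nat.sub_add_cancel hlen]⟩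
  · rintro ⟨m, n, rfl⟩
    exact ⟨m, n + 1, n.succ_pos, rfl⟩

lemma isRun_of_isChain_succ {l : List ℕ} (hne : l ≠ []) (h : l.IsChain fun a b => b = a + 1) :
    IsRun l := by
  induction l with
  | nil => exact absurd rfl hne
  | cons x t ih =>
    rw [isRun_iff_exists_range']
    rcases t with _ | ⟨y, t⟩
    · exact ⟨x, 0, rfl⟩
    · obtain ⟨rfl, hchain⟩ := isChain_cons_cons.1 h
      obtain ⟨m, n, hmn⟩ := isRun_iff_exists_range'.1 (ih (cons_ne_nil _ _) hchain)
      obtain rfl : m = x + 1 := by simpa [range'_succ] using (congrArg head? hmn).symm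
      exact ⟨x, n + 1, by rw [hmn]; rfl⟩

namespace IsRun

variable {l l₁ l₂ : List ℕ}

lemma ne_nil (h : IsRun l) : l ≠ [] := by
  obtain ⟨m, n, rfl⟩ := isRun_iff_exists_range'.1 h
  simp [range'_succ]

lemma headI_le_getLastD (h : IsRun l) : l.headI ≤ l.getLastD 0 := by
  obtain ⟨m, n, rfl⟩ := isRun_iff_exists_range'.1 h
  rw [headI_range'_succ, getLastD_range'_succ]
  omega

lemma getLastD_lt_headI_of_disjoint (h₁ : IsRun l₁) (h₂ : IsRun l₂) (hdisj : l₁.Disjoint l₂)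
    (hle : l₂.headI ≤ l₁.getLastD 0) : l₂.getLastD 0 < l₁.headI := by
  obtain ⟨m₁, n₁, rfl⟩ := isRun_iff_exists_range'.1 h₁
  obtain ⟨m₂, n₂, rfl⟩ := isRun_iff_exists_range'.1 h₂
  have hm₂ : m₂ ∉ range' m₁ (n₁ + 1) := fun h => hdisj h (mem_range'_1.2 ⟨le_rfl, by omega⟩)
  have hm₁ : m₁ ∉ range' m₂ (n₂ + 1) := fun h => hdisj (mem_range'_1.2 ⟨le_rfl, by omega⟩) h
  simp only [headI_range'_succ, getLastD_range'_succ, mem_range'_1] at hle hm₁ hm₂ ⊢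
  omega

end IsRun

lemma List.IsChain.and {α : Type*} {R S : α → α → Prop} {l : List α} (hR : l.IsChain R)
    (hS : l.IsChain S) : l.IsChain fun a b => R a b ∧ S a b :=
  isChain_iff_getElem.2 fun i hi => ⟨hR.getElem i hi, hS.getElem i hi⟩

lemma isChain_flatten_of_isRun {ls : List (List ℕ)} (hrun : ∀ l ∈ ls, IsRun l)
    (hadj : ls.IsChain fun l₁ l₂ => l₂.headI ≤ l₁.getLastD 0 + 1) :
    ls.flatten.IsChain fun a b => b ≤ a + 1 := by
  rw [isChain_flatten fun hnil => (hrun [] hnil).ne_nil rfl]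
  refine ⟨fun l hl => ?_, hadj.imp_of_mem_imp fun l₁ l₂ h₁ h₂ hle => ?_⟩
  · obtain ⟨m, n, rfl⟩ := isRun_iff_exists_range'.1 (hrun l hl)
    exact (isChain_range' m _ 1).imp fun a b hab => hab.le
  · obtain ⟨m₁, n₁, rfl⟩ := isRun_iff_exists_range'.1 (hrun l₁ h₁)
    obtain ⟨m₂, n₂, rfl⟩ := isRun_iff_exists_range'.1 (hrun l₂ h₂)
    rw [headI_range'_succ, getLastD_range'_succ] at hle
    simp only [getLast?_range'_succ, head?_range'_succ, Option.mem_def, Option.some.injEq,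
      forall_eq']
    omega

lemma isChain_flatten_of_headI_lt {ls : List (List ℕ)} (hrun : ∀ l ∈ ls, IsRun l)
    (h : ls.IsChain fun l₁ l₂ => l₂.headI < l₁.headI) :
    ls.flatten.IsChain fun a b => b ≤ a + 1 :=
  isChain_flatten_of_isRun hrun <| h.imp_of_mem_imp fun l₁ _ h₁ _ hlt => by
    have := (hrun l₁ h₁).headI_le_getLastD
    omega

lemma isChain_flatten_of_getLastD_lt {ls : List (List ℕ)} (hrun : ∀ l ∈ ls, IsRun l)
    (h : ls.IsChain fun l₁ l₂ => l₂.getLastD 0 < l₁.getLastD 0) :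
    ls.flatten.IsChain fun a b => b ≤ a + 1 :=
  isChain_flatten_of_isRun hrun <| h.imp_of_mem_imp fun _ l₂ _ h₂ hlt => by
    have := (hrun l₂ h₂).headI_le_getLastD
    omega

def maximalRuns (l : List ℕ) : List (List ℕ) :=
  l.splitBy fun a b => b == a + 1

lemma flatten_maximalRuns (l : List ℕ) : (maximalRuns l).flatten = l :=
  flatten_splitBy _ l

lemma isRun_of_mem_maximalRuns {l r : List ℕ} (h : r ∈ maximalRuns l) : IsRun r :=
  isRun_of_isChain_succ (ne_nil_of_mem_splitBy h)
    ((isChain_of_mem_splitBy h).imp fun _ _ => by simp)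

/-- Adjacent maximal runs: the second starts at most one past the end of the first, and by
maximality not exactly there. -/
lemma isChain_maximalRuns {l : List ℕ} (hnd : l.Nodup) (hl : l.IsChain fun a b => b ≤ a + 1) :
    (maximalRuns l).IsChain fun l₁ l₂ => l₂.getLastD 0 < l₁.headI := by
  have hbreak := isChain_getLast_head_splitBy (fun a b => b == a + 1) l
  rw [← flatten_maximalRuns l, maximalRuns, isChain_flatten (nil_notMem_splitBy _ l)] at hl
  rw [← flatten_maximalRuns l, nodup_flatten] at hnd
  refine ((hbreak.and hl.2).and hnd.2.isChain).imp_of_mem_imp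
    fun l₁ l₂ h₁ h₂ ⟨⟨⟨hne₁, hne₂, hjump⟩, hstep⟩, hdisj⟩ => ?_
  have hrun₁ := isRun_of_mem_maximalRuns h₁
  have hrun₂ := isRun_of_mem_maximalRuns h₂
  refine hrun₁.getLastD_lt_headI_of_disjoint hrun₂ hdisj ?_
  obtain ⟨m₁, n₁, rfl⟩ := isRun_iff_exists_range'.1 hrun₁
  obtain ⟨m₂, n₂, rfl⟩ := isRun_iff_exists_range'.1 hrun₂
  rw [headI_range'_succ, getLastD_range'_succ]
  simp only [head_range', getLast_range', Nat.add_succ_sub_one, beq_eq_false_iff_ne,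
    getLast?_range'_succ, head?_range'_succ, Option.mem_def, Option.some.injEq,
    forall_eq'] at hjump hstep
  omega

lemma isChain_headI_maximalRuns {l : List ℕ} (hnd : l.Nodup)
    (hl : l.IsChain fun a b => b ≤ a + 1) :
    (maximalRuns l).IsChain fun l₁ l₂ => l₂.headI < l₁.headI :=
  (isChain_maximalRuns hnd hl).imp_of_mem_imp fun _ _ _ h₂ hlt =>
    (isRun_of_mem_maximalRuns h₂).headI_le_getLastD.trans_lt hlt

lemma isChain_getLastD_maximalRuns {l : List ℕ} (hnd : l.Nodup)
    (hl : l.IsChain fun a b => b ≤ a + 1) :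
    (maximalRuns l).IsChain fun l₁ l₂ => l₂.getLastD 0 < l₁.getLastD 0 :=
  (isChain_maximalRuns hnd hl).imp_of_mem_imp fun _ _ h₁ _ hlt =>
    hlt.trans_le (isRun_of_mem_maximalRuns h₁).headI_le_getLastD

lemma List.forall_ne_rel_getElem_iff_isChain_take_drop {α : Type*} {R : α → α → Prop}
    {l : List α} {e : ℕ} :
    (∀ i (hi : i + 1 < l.length), i ≠ e → R l[i] l[i + 1]) ↔
      (l.take (e + 1)).IsChain R ∧ (l.drop (e + 1)).IsChain R := by
  simp only [isChain_iff_getElem, length_take, length_drop, getElem_take, getElem_drop]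
  constructor
  · intro h
    exact ⟨fun i hi => h i (by omega) (by omega), fun i hi => h _ (by omega) (by omega)⟩
  · rintro ⟨htake, hdrop⟩ i hi hne
    rcases Nat.lt_or_gt_of_ne hne with hlt | hgt
    · exact htake i (by omega)
    · obtain ⟨k, rfl⟩ : ∃ k, i = e + 1 + k := ⟨i - (e + 1), by omega⟩
      exact hdrop k (by omega)

section OfFn

variable {n : ℕ} {f : Fin (n + 1) → ℕ} {e : Fin (n + 1)}

lemma ofFn_eq_take_append_cons_drop (he : f e = 0) :
    ofFn f = (ofFn f).take e ++ 0 :: (ofFn f).drop (e + 1) := by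
  have he' : (ofFn f)[(e : ℕ)]'(by simp [e.is_le]) = 0 := by
    rw [List.getElem_ofFn, Fin.eta, he]
  rw [← he', ← drop_eq_getElem_cons, take_append_drop]

/-- The step at the `0` itself is excluded; the step into it holds trivially. -/
lemma forall_ne_succ_le_add_one_iff_isChain_take_drop (he : f e = 0) :
    (∀ i : Fin n, (i : ℕ) ≠ e → f i.succ ≤ f i.castSucc + 1) ↔
      ((ofFn f).take e).IsChain (fun a b => b ≤ a + 1) ∧
        ((ofFn f).drop (e + 1)).IsChain (fun a b => b ≤ a + 1) := by
  convert forall_ne_rel_getElem_iff_isChain_take_drop (R := fun a b : ℕ => b ≤ a + 1)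
    (l := ofFn f) (e := e) using 1
  · simp only [length_ofFn, List.getElem_ofFn, Fin.forall_iff, Fin.succ_mk, Fin.castSucc_mk,
      Nat.add_lt_add_iff_right]
  · rw [take_add_one, getElem?_eq_getElem (by simp [e.is_le]), List.getElem_ofFn, Fin.eta, he]
    simp [isChain_append]

end OfFn

lemma ofFn_val_perm_range_of_bijective {n : ℕ} {b : Fin n → Fin n} (hb : Function.Bijective b) :
    (List.ofFn fun i => (b i : ℕ)).Perm (range n) := by
  have hnd : (List.ofFn fun i => (b i : ℕ)).Nodup := nodup_ofFn.2 (Fin.val_injective.comp hb.1)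
  rw [perm_ext_iff_of_nodup hnd nodup_range]
  intro a
  simp only [mem_ofFn, mem_range]
  exact ⟨by rintro ⟨i, rfl⟩; exact (b i).isLt, fun ha => (hb.2 ⟨a, ha⟩).imp fun i hi => by rw [hi]⟩

lemma perm_range'_one_of_append_zero_cons {A B : List ℕ} {n : ℕ}
    (h : (A ++ 0 :: B).Perm (range (n + 1))) : (A ++ B).Perm (range' 1 n) := by
  rw [range_eq_range', range'_succ, zero_add] at h
  exact (perm_middle.symm.trans h).cons_inv

theorem stmt_4_general (d : ℕ) (b : Fin (d + 1) → Fin (d + 1))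
    (hb : Function.Bijective b) (e : Fin (d + 1)) (he : b e = 0) :
    (∀ i : Fin d, (i : ℕ) ≠ (e : ℕ) → (b i.succ : ℕ) ≤ (b i.castSucc : ℕ) + 1) ↔
    ∃ v h : List (List ℕ),
      (List.ofFn fun i : Fin (d + 1) => (b i : ℕ)) = v.flatten ++ [0] ++ h.flatten ∧
      (∀ l ∈ v ++ h, IsRun l) ∧
      ((v ++ h).flatten).Perm (List.range' 1 d) ∧
      List.Chain' (fun l₁ l₂ => l₂.headI < l₁.headI) v ∧
      List.Chain' (fun l₁ l₂ => l₂.getLastD 0 < l₁.getLastD 0) h := by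
  have he' : (b e : ℕ) = 0 := by rw [he, Fin.val_zero]
  refine (forall_ne_succ_le_add_one_iff_isChain_take_drop (f := fun i => (b i : ℕ)) he').trans ?_
  have hsplit := ofFn_eq_take_append_cons_drop (f := fun i => (b i : ℕ)) he'
  have hperm := ofFn_val_perm_range_of_bijective hb
  generalize List.ofFn (fun i => (b i : ℕ)) = L at hsplit hperm ⊢
  generalize L.take e = A at hsplit ⊢
  generalize L.drop (e + 1) = B at hsplit ⊢
  subst hsplit
  have hnd : (A ++ 0 :: B).Nodup := hperm.nodup_iff.2 nodup_range
  constructor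
  · rintro ⟨hA, hB⟩
    have hndA : A.Nodup := hnd.sublist (sublist_append_left _ _)
    have hndB : B.Nodup := hnd.sublist ((sublist_cons_self _ _).trans (sublist_append_right _ _))
    refine ⟨maximalRuns A, maximalRuns B, by simp [flatten_maximalRuns], fun l hl => ?_,
      by simpa [flatten_maximalRuns] using perm_range'_one_of_append_zero_cons hperm,
      isChain_headI_maximalRuns hndA hA, isChain_getLastD_maximalRuns hndB hB⟩
    rcases mem_append.1 hl with hl | hl <;> exact isRun_of_mem_maximalRuns hl
  · rintro ⟨v, h, hvh, hrun, -, hv, hh⟩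
    have h0 : 0 ∉ A ++ B := (nodup_cons.1 (nodup_middle.1 hnd)).1
    rw [append_assoc, singleton_append, append_cons_inj_of_notMem
      (fun h => h0 (mem_append_left _ h)) (fun h => h0 (mem_append_right _ h))] at hvh
    obtain ⟨rfl, -, rfl⟩ := hvh
    exact ⟨isChain_flatten_of_headI_lt (fun l hl => hrun l (mem_append_left _ hl)) hv,
      isChain_flatten_of_getLastD_lt (fun l hl => hrun l (mem_append_right _ hl)) hh⟩

/-- characterization of branch labels, combinatorial. For a
bijection `b` of `{0,…,d}` with `b e = 0`, one has `b(i+1) ≤ b(i)+1` for all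
`i ≠ e` iff the word `(b 0, …, b d)` decomposes as runs `v_1 … v_a`, then `0`,
then runs `h_1 … h_c`, the runs being disjoint with union `{1,…,d}`, the heads
(minima) of the `v`'s strictly decreasing and the last entries (maxima) of the
`h`'s strictly decreasing. -/
theorem stmt_4 (d : ℕ) (hd : 1 ≤ d) (b : Fin (d + 1) → Fin (d + 1))
    (hb : Function.Bijective b) (e : Fin (d + 1)) (he : b e = 0) :
    (∀ i : Fin d, (i : ℕ) ≠ (e : ℕ) → (b i.succ : ℕ) ≤ (b i.castSucc : ℕ) + 1) ↔
    ∃ v h : List (List ℕ),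
      (List.ofFn fun i : Fin (d + 1) => (b i : ℕ)) = v.flatten ++ [0] ++ h.flatten ∧
      (∀ l ∈ v ++ h, IsRun l) ∧
      ((v ++ h).flatten).Perm (List.range' 1 d) ∧
      List.Chain' (fun l₁ l₂ => l₂.headI < l₁.headI) v ∧
      List.Chain' (fun l₁ l₂ => l₂.getLastD 0 < l₁.getLastD 0) h :=
  stmt_4_general d b hb e he
end

section
/- Let d ≥ 2 and k ≥ 1 be integers. Let P = (p_1 ≥ p_2 ≥ …) and Q = (q_1 ≥ q_2 ≥ …) be partitions of d(d+k−1), each having diagonal lengths T(d,k) and each satisfying the CI criterion. Define H(P) = {i ∈ {0, 1, …, d−1} : p_1 + ⋯ + p_{i+1} = (i+1)(2d+k−2−i)} and define H(Q) analogously (parts beyond the length of a partition are taken to be 0). Then Q ≤ P in the dominance order if and only if H(Q) ⊆ H(P). -/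
open MvPolynomial

/-!
Write `S_P(m) = p_1 + ⋯ + p_m` and `f(m) = m (2d + k - 1 - m)`. Peel off the first block `p^n` of a
partition `P` with diagonal lengths `T(d,k)` satisfying the CI criterion: the criterion makes the
hook `p_r + r` of every row at most that of the first block, so the diagonal lengths force
`p + n = 2d + k - 1`, and what remains is again such a partition for `(d - n, k)`, unless
`P = d^(d+k-1)`. Hence `S_P` meets `f` at the ends of the blocks ("anchors") and is linear in
between; as `f` is concave, `S_P ≤ f`, and `H(P)` is the set of anchors in `[1, d]`.

If `Q ≤ P`, an anchor `m` of `Q` is one of `P` because `f(m) = S_Q(m) ≤ S_P(m) ≤ f(m)`.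
Conversely, if `H(Q) ⊆ H(P)`, then on each linear stretch `[a, b]` of `S_Q` the concave function
`S_P` agrees with `S_Q` at `a` and `b`, hence dominates it.
-/

theorem Antitone.chord_le_sum_range {x : ℕ → ℤ} (hx : Antitone x) {a m b : ℕ}
    (ham : a ≤ m) (hmb : m ≤ b) :
    (b - m : ℤ) * ∑ r ∈ Finset.range a, x r + (m - a) * ∑ r ∈ Finset.range b, x r ≤
      (b - a) * ∑ r ∈ Finset.range m, x r := by
  have left : (m - a : ℤ) * x m ≤ ∑ r ∈ Finset.Ico a m, x r := by
    have := Finset.card_nsmul_le_sum (Finset.Ico a m) x (x m)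
      fun r hr => hx (Finset.mem_Ico.mp hr).2.le
    rwa [Nat.card_Ico, nsmul_eq_mul, Nat.cast_sub ham] at this
  have right : ∑ r ∈ Finset.Ico m b, x r ≤ (b - m : ℤ) * x m := by
    have := Finset.sum_le_card_nsmul (Finset.Ico m b) x (x m)
      fun r hr => hx (Finset.mem_Ico.mp hr).1
    rwa [Nat.card_Ico, nsmul_eq_mul, Nat.cast_sub hmb] at this
  have hm := Finset.sum_range_add_sum_Ico x ham
  have hb := Finset.sum_range_add_sum_Ico x hmb
  have hbm : (0 : ℤ) ≤ b - m := sub_nonneg.mpr (Nat.cast_le.mpr hmb)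
  have hma : (0 : ℤ) ≤ m - a := sub_nonneg.mpr (Nat.cast_le.mpr ham)
  nlinarith [mul_le_mul_of_nonneg_left left hbm, mul_le_mul_of_nonneg_left right hma]

def partialSum (P : List ℕ) (m : ℕ) : ℤ := ((P.take m).sum : ℤ)

theorem partialSum_eq_sum_range (P : List ℕ) (m : ℕ) :
    partialSum P m = ∑ r ∈ Finset.range m, (P.getD r 0 : ℤ) := by
  induction m with
  | zero => simp [partialSum]
  | succ m ih =>
    rw [Finset.sum_range_succ, ← ih, partialSum, partialSum, List.take_add_one]
    cases h : P[m]? <;> simp [List.getD_eq_getElem?_getD, h]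

theorem List.Pairwise.antitone_getD {P : List ℕ} (hP : P.Pairwise (· ≥ ·)) :
    Antitone fun r => P.getD r 0 := by
  intro r s hrs
  show P.getD s 0 ≤ P.getD r 0
  rcases lt_or_ge s P.length with hs | hs
  · rw [List.getD_eq_getElem P 0 hs, List.getD_eq_getElem P 0 (hrs.trans_lt hs)]
    rcases hrs.lt_or_eq with h | rfl
    · exact List.pairwise_iff_getElem.mp hP r s _ hs h
    · rfl
  · rw [List.getD_eq_default P 0 hs]
    exact Nat.zero_le _

theorem partialSum_chord_le {P : List ℕ} (hP : P.Pairwise (· ≥ ·)) {a m b : ℕ}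
    (ham : a ≤ m) (hmb : m ≤ b) :
    (b - m : ℤ) * partialSum P a + (m - a) * partialSum P b ≤ (b - a) * partialSum P m := by
  simp only [partialSum_eq_sum_range]
  exact (Nat.mono_cast.comp_antitone hP.antitone_getD).chord_le_sum_range ham hmb

theorem partialSum_of_length_le {P : List ℕ} {m : ℕ} (h : P.length ≤ m) :
    partialSum P m = P.sum := by
  rw [partialSum, List.take_of_length_le h]

theorem partialSum_replicate_append_of_le {p n m : ℕ} (Q : List ℕ) (h : m ≤ n) :
    partialSum (List.replicate n p ++ Q) m = m * p := by
  simp [partialSum, List.take_append, List.take_replicate, h, Nat.sub_eq_zero_of_le h]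

theorem partialSum_replicate_append_add (p n : ℕ) (Q : List ℕ) (x : ℕ) :
    partialSum (List.replicate n p ++ Q) (n + x) = n * p + partialSum Q x := by
  simp [partialSum, List.take_append, List.take_replicate]

theorem diagLen_cons_add_one (x : ℕ) (xs : List ℕ) (j : ℕ) :
    diagLen (x :: xs) (j + 1) = (if j + 1 < x then 1 else 0) + diagLen xs j := by
  rw [diagLen, diagLen, Finset.card_filter, Finset.card_filter, Finset.sum_range_succ']
  simp only [List.getD_cons_succ, List.getD_cons_zero, Nat.sub_zero, Nat.add_sub_add_right]
  rw [add_comm]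

theorem diagLen_replicate_append (p : ℕ) (Q : List ℕ) (n j : ℕ) :
    diagLen (List.replicate n p ++ Q) (n + j) = min n (p - (j + 1)) + diagLen Q j := by
  induction n with
  | zero => simp
  | succ n ih =>
    rw [List.replicate_succ, List.cons_append, Nat.add_right_comm, diagLen_cons_add_one, ih]
    split_ifs <;> omega

theorem diagLen_pos {P : List ℕ} {r j : ℕ} (hr : r ≤ j) (h : j - r < P.getD r 0) :
    0 < diagLen P j :=
  Finset.card_pos.mpr ⟨r, Finset.mem_filter.mpr ⟨Finset.mem_range.mpr (by omega), h⟩⟩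

theorem diagLen_eq_zero {P : List ℕ} {N j : ℕ} (hP : ∀ r < P.length, P.getD r 0 + r < N)
    (hj : N ≤ j + 1) : diagLen P j = 0 := by
  refine Finset.card_eq_zero.mpr (Finset.filter_eq_empty_iff.mpr fun r hr h => ?_)
  have hrj := Finset.mem_range.mp hr
  rcases lt_or_ge r P.length with hr | hr
  · have := hP r hr
    omega
  · rw [List.getD_eq_default P 0 hr] at h
    omega

theorem lt_getD_of_diagLen_eq {P : List ℕ} {r j : ℕ} (h : diagLen P j = j + 1) (hr : r ≤ j) :
    j - r < P.getD r 0 :=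
  Finset.filter_card_eq (h.trans (Finset.card_range _).symm) r
    (Finset.mem_range.mpr (Nat.lt_succ_of_le hr))

theorem Tdk_add {d k p n : ℕ} (hpn : p + n = 2 * d + k - 1) (hn : n ≤ d) (j : ℕ) :
    Tdk d k (n + j) = min n (p - (j + 1)) + Tdk (d - n) k j := by
  simp only [Tdk]
  split_ifs <;> omega

theorem Tdk_pred_self {d k : ℕ} (hd : 1 ≤ d) (hk : 1 ≤ k) : Tdk d k (d - 1) = d := by
  rw [Tdk]
  split_ifs <;> omega

theorem List.exists_eq_replicate_append {P : List ℕ} (hne : P ≠ []) (hP : P.Pairwise (· ≥ ·)) :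
    ∃ p n Q, 0 < n ∧ P = List.replicate n p ++ Q ∧ ∀ x ∈ Q, x < p := by
  induction P with
  | nil => exact absurd rfl hne
  | cons x t ih =>
    obtain ⟨hxt, ht⟩ := List.pairwise_cons.mp hP
    rcases eq_or_ne t [] with rfl | hne
    · exact ⟨x, 1, [], one_pos, rfl, by simp⟩
    obtain ⟨p, n, Q, hn, rfl, hQ⟩ := ih hne ht
    have hpx : p ≤ x := hxt p (List.mem_append_left _ (List.mem_replicate.mpr ⟨hn.ne', rfl⟩))
    rcases hpx.eq_or_lt with rfl | hpx
    · exact ⟨p, n + 1, Q, n.succ_pos, rfl, hQ⟩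
    · refine ⟨x, 1, List.replicate n p ++ Q, one_pos, rfl, fun y hy => ?_⟩
      rcases List.mem_append.mp hy with hy | hy
      · exact (List.eq_of_mem_replicate hy).trans_lt hpx
      · exact (hQ y hy).trans hpx

theorem count_replicate_append_self {p n : ℕ} {Q : List ℕ} (hQ : ∀ x ∈ Q, x < p) :
    (List.replicate n p ++ Q).count p = n := by
  rw [List.count_append, List.count_replicate_self,
    List.count_eq_zero.mpr fun h => (hQ p h).false, add_zero]

theorem count_replicate_append_of_ne {p n q : ℕ} (Q : List ℕ) (hq : q ≠ p) :
    (List.replicate n p ++ Q).count q = Q.count q := by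
  rw [List.count_append, List.count_replicate, if_neg (by simpa using hq.symm), zero_add]

theorem CICriterion.of_replicate_append {p n : ℕ} {Q : List ℕ} (hQ : ∀ x ∈ Q, x < p)
    (hCI : CICriterion (List.replicate n p ++ Q)) : CICriterion Q := by
  intro a b ha hb hba hadj
  have h := hCI a b (List.mem_append_right _ ha) (List.mem_append_right _ hb) hba fun x hx => by
    rcases List.mem_append.mp hx with hx | hx
    · exact .inr ((hQ a ha).le.trans (List.eq_of_mem_replicate hx).ge)
    · exact hadj x hx
  rwa [count_replicate_append_of_ne Q (hQ a ha).ne,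
    count_replicate_append_of_ne Q (hba.trans (hQ a ha)).ne] at h

theorem CICriterion.eq_of_replicate_append_replicate_append {p n p₂ n₂ : ℕ} {R : List ℕ}
    (hn : 0 < n) (hn₂ : 0 < n₂) (hp₂ : p₂ < p) (hR : ∀ x ∈ R, x < p₂)
    (hCI : CICriterion (List.replicate n p ++ (List.replicate n₂ p₂ ++ R))) :
    p = n + n₂ + p₂ := by
  have hQ : ∀ x ∈ List.replicate n₂ p₂ ++ R, x < p := fun x hx => by
    rcases List.mem_append.mp hx with hx | hx
    · exact (List.eq_of_mem_replicate hx).trans_lt hp₂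
    · exact (hR x hx).trans hp₂
  have hp : p ∈ List.replicate n p ++ (List.replicate n₂ p₂ ++ R) :=
    List.mem_append_left _ (List.mem_replicate.mpr ⟨hn.ne', rfl⟩)
  have hp₂' : p₂ ∈ List.replicate n p ++ (List.replicate n₂ p₂ ++ R) :=
    List.mem_append_right _ (List.mem_append_left _ (List.mem_replicate.mpr ⟨hn₂.ne', rfl⟩))
  have h := hCI p p₂ hp hp₂' hp₂ fun x hx => by
    rcases List.mem_append.mp hx with hx | hx
    · exact .inr (List.eq_of_mem_replicate hx).ge
    · refine .inl ?_
      rcases List.mem_append.mp hx with hx | hx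
      · exact (List.eq_of_mem_replicate hx).le
      · exact (hR x hx).le
  rwa [count_replicate_append_self hQ, count_replicate_append_of_ne _ hp₂.ne,
    count_replicate_append_self hR] at h

theorem CICriterion.getD_add_lt {p n : ℕ} {Q : List ℕ} (hn : 0 < n) (hQ : ∀ x ∈ Q, x < p)
    (hs : Q.Pairwise (· ≥ ·)) (hCI : CICriterion (List.replicate n p ++ Q)) :
    ∀ r < (List.replicate n p ++ Q).length, (List.replicate n p ++ Q).getD r 0 + r < p + n := by
  induction hl : Q.length using Nat.strong_induction_on generalizing p n Q with
  | _ l ih =>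
  intro r hr
  rw [List.length_append, List.length_replicate] at hr
  rcases lt_or_ge r n with hrn | hrn
  · rw [List.getD_append _ _ _ _ (by simpa using hrn), List.getD_replicate p hrn]
    omega
  obtain ⟨p₂, n₂, R, hn₂, rfl, hR⟩ :=
    List.exists_eq_replicate_append (List.ne_nil_of_length_pos (by omega)) hs
  have hp₂ : p₂ < p := hQ p₂ (List.mem_append_left _ (List.mem_replicate.mpr ⟨hn₂.ne', rfl⟩))
  -- the next block has hook `p₂ + n₂ = p - n`
  have hrel := hCI.eq_of_replicate_append_replicate_append hn hn₂ hp₂ hR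
  have htail := ih R.length (by simp [← hl]; omega) hn₂ hR (List.pairwise_append.mp hs).2.1
    (hCI.of_replicate_append hQ) rfl (r - n) (by simp at hr ⊢; omega)
  rw [List.getD_append_right _ _ _ _ (by simpa using hrn), List.length_replicate]
  omega

theorem add_eq_of_diagLen_eq_Tdk {d k p n : ℕ} {Q : List ℕ} (hd : 1 ≤ d) (hk : 1 ≤ k)
    (hn : 0 < n) (hp : 0 < p)
    (hhook : ∀ r < (List.replicate n p ++ Q).length, (List.replicate n p ++ Q).getD r 0 + r < p + n)
    (hdiag : ∀ j, diagLen (List.replicate n p ++ Q) j = Tdk d k j) :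
    p + n = 2 * d + k - 1 := by
  have hcorner : (List.replicate n p ++ Q).getD (n - 1) 0 = p := by
    rw [List.getD_append _ _ _ _ (by simp; omega), List.getD_replicate p (by omega)]
  have hlast := diagLen_pos (P := List.replicate n p ++ Q) (r := n - 1) (j := p + n - 2)
    (by omega) (by rw [hcorner]; omega)
  have hupper : p + n ≤ 2 * d + k - 1 := by
    rw [hdiag, Tdk] at hlast
    split_ifs at hlast <;> omega
  have hlower : 2 * d + k - 1 ≤ p + n := by
    by_contra h
    have hbeyond := hdiag (2 * d + k - 3)
    rw [diagLen_eq_zero hhook (by omega), Tdk, if_pos le_rfl] at hbeyond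
    omega
  omega

def maxPartialSum (d k m : ℕ) : ℤ := m * (2 * d + k - 1 - m)

def BetweenAnchors (d k : ℕ) (P : List ℕ) (m : ℕ) : Prop :=
  ∃ a b : ℕ, a < m ∧ m ≤ b ∧ a ≤ d ∧ (b ≤ d ∨ b = d + k - 1) ∧
    partialSum P a = maxPartialSum d k a ∧ partialSum P b = maxPartialSum d k b ∧
    (b - a : ℤ) * partialSum P m = (b - m) * partialSum P a + (m - a) * partialSum P b

def IsAnchored (d k : ℕ) (P : List ℕ) : Prop :=
  P.length ≤ d + k - 1 ∧ ∀ m, 1 ≤ m → m ≤ d + k - 1 → BetweenAnchors d k P m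

theorem maxPartialSum_zero (d k : ℕ) : maxPartialSum d k 0 = 0 := by
  simp [maxPartialSum]

theorem partialSum_zero (P : List ℕ) : partialSum P 0 = 0 := by
  simp [partialSum]

theorem maxPartialSum_add {d k p n : ℕ} (hk : 1 ≤ k) (hpn : p + n = 2 * (n + d) + k - 1)
    (x : ℕ) : maxPartialSum (n + d) k (n + x) = n * p + maxPartialSum d k x := by
  have hpnZ : (p : ℤ) = n + 2 * d + k - 1 := by omega
  simp only [maxPartialSum, hpnZ]
  push_cast
  ring

theorem isAnchored_nil (k : ℕ) : IsAnchored 0 k [] := by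
  refine ⟨by simp, fun m hm1 hmk =>
    ⟨0, k - 1, hm1, by omega, le_rfl, .inr (by simp), ?_, ?_, ?_⟩⟩ <;>
    simp [partialSum, maxPartialSum]
  omega

theorem isAnchored_replicate {d k : ℕ} (hk : 1 ≤ k) :
    IsAnchored d k (List.replicate (d + k - 1) d) := by
  have hsum : ∀ m ≤ d + k - 1, partialSum (List.replicate (d + k - 1) d) m = m * d := fun m hm => by
    simpa using partialSum_replicate_append_of_le (p := d) [] hm
  refine ⟨by simp, fun m hm1 hmk =>
    ⟨0, d + k - 1, hm1, hmk, Nat.zero_le d, .inr rfl, ?_, ?_, ?_⟩⟩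
  · simp [partialSum_zero, maxPartialSum_zero]
  · rw [hsum _ le_rfl, maxPartialSum]
    push_cast [Nat.cast_sub (by omega : 1 ≤ d + k)]
    ring
  · rw [hsum _ le_rfl, hsum _ hmk, partialSum_zero]
    ring

theorem IsAnchored.replicate_append {d k p n : ℕ} {Q : List ℕ} (hk : 1 ≤ k)
    (hQ : IsAnchored d k Q) (hpn : p + n = 2 * (n + d) + k - 1) :
    IsAnchored (n + d) k (List.replicate n p ++ Q) := by
  refine ⟨by simp; have := hQ.1; omega, fun m hm1 hmk => ?_⟩
  rcases le_or_gt m n with hmn | hnm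
  · refine ⟨0, n, hm1, hmn, Nat.zero_le _, .inl (Nat.le_add_right n d), ?_, ?_, ?_⟩
    · simp [partialSum_zero, maxPartialSum_zero]
    · rw [partialSum_replicate_append_of_le Q le_rfl]
      simpa [maxPartialSum_zero] using (maxPartialSum_add hk hpn 0).symm
    · rw [partialSum_replicate_append_of_le Q hmn, partialSum_replicate_append_of_le Q le_rfl,
        partialSum_zero]
      ring
  obtain ⟨m, rfl⟩ := Nat.exists_eq_add_of_lt hnm
  obtain ⟨a, b, ham, hmb, had, hbd, hQa, hQb, hchord⟩ := hQ.2 (m + 1) (by omega) (by omega)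
  refine ⟨n + a, n + b, by omega, by omega, by omega, by omega, ?_, ?_, ?_⟩
  · rw [partialSum_replicate_append_add, hQa, maxPartialSum_add hk hpn]
  · rw [partialSum_replicate_append_add, hQb, maxPartialSum_add hk hpn]
  · rw [show n + m + 1 = n + (m + 1) by ring]
    simp only [partialSum_replicate_append_add]
    push_cast at hchord ⊢
    linear_combination hchord

theorem rest_sum_eq_of_hook {d k p n s : ℕ} (hk : 1 ≤ k) (hpn : p + n = 2 * (n + d) + k - 1)
    (hsum : n * p + s = (n + d) * (n + d + k - 1)) : s = d * (d + k - 1) := by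
  obtain ⟨k, rfl⟩ := Nat.exists_eq_add_of_le' hk
  obtain rfl : p = n + 2 * d + k := by omega
  rw [show n + d + (k + 1) - 1 = n + d + k by omega] at hsum
  rw [show d + (k + 1) - 1 = d + k by omega]
  nlinarith

theorem width_eq_and_rest_sum_eq_zero_of_hook {d k p n s : ℕ} (hpn : p + n = 2 * d + k - 1)
    (hdp : d ≤ p) (hdn : d < n) (hsum : n * p + s = d * (d + k - 1)) : p = d ∧ s = 0 := by
  obtain ⟨e, rfl⟩ := Nat.exists_eq_add_of_lt hdn
  obtain ⟨f, rfl⟩ := Nat.exists_eq_add_of_le hdp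
  obtain rfl : k = e + f + 2 := by omega
  have : (e + 1) * f + s = 0 := by
    simp only [show d + (e + f + 2) - 1 = d + e + f + 1 by omega] at hsum
    nlinarith
  constructor <;> nlinarith

theorem isAnchored_of_ciCriterion {k : ℕ} (hk : 1 ≤ k) {d : ℕ} {P : List ℕ}
    (hP : IsPartitionList P) (hsum : P.sum = d * (d + k - 1))
    (hdiag : ∀ j, diagLen P j = Tdk d k j) (hCI : CICriterion P) : IsAnchored d k P := by
  induction d using Nat.strong_induction_on generalizing P with
  | _ d ih =>
  rcases eq_or_ne P [] with rfl | hne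
  · obtain rfl : d = 0 := by
      rcases Nat.mul_eq_zero.mp hsum.symm with h | h <;> omega
    exact isAnchored_nil k
  have hd : 1 ≤ d := by
    rcases Nat.eq_zero_or_pos d with rfl | hd
    · exact absurd hsum (by simpa using (List.sum_pos P hP.2 hne).ne')
    · exact hd
  obtain ⟨p, n, Q, hn, rfl, hQ⟩ := List.exists_eq_replicate_append hne hP.1
  have hQs : Q.Pairwise (· ≥ ·) := (List.pairwise_append.mp hP.1).2.1
  have hp : 0 < p := hP.2 p (List.mem_append_left _ (List.mem_replicate.mpr ⟨hn.ne', rfl⟩))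
  have hpn := add_eq_of_diagLen_eq_Tdk hd hk hn hp (hCI.getD_add_lt hn hQ hQs) hdiag
  have hsum' : n * p + Q.sum = d * (d + k - 1) := by
    simpa [List.sum_replicate] using hsum
  rcases le_or_gt n d with hnd | hdn
  · obtain ⟨d, rfl⟩ := Nat.exists_eq_add_of_le hnd
    refine IsAnchored.replicate_append hk (ih d (by omega)
      ⟨hQs, fun x hx => hP.2 x (List.mem_append_right _ hx)⟩ (rest_sum_eq_of_hook hk hpn hsum')
      (fun j => ?_) (hCI.of_replicate_append hQ)) hpn
    have h := diagLen_replicate_append p Q n j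
    rw [hdiag, Tdk_add hpn hnd, Nat.add_sub_cancel_left] at h
    omega
  · have hdp : d ≤ p := by
      have h := lt_getD_of_diagLen_eq (j := d - 1)
        ((hdiag _).trans (by rw [Tdk_pred_self hd hk]; omega)) (Nat.zero_le _)
      rw [List.getD_append _ _ _ _ (by simpa using hn), List.getD_replicate p hn] at h
      omega
    obtain ⟨rfl, hQsum⟩ := width_eq_and_rest_sum_eq_zero_of_hook hpn hdp hdn hsum'
    obtain rfl : Q = [] := List.eq_nil_iff_forall_not_mem.mpr fun x hx =>
      (hP.2 x (List.mem_append_right _ hx)).ne' (List.sum_eq_zero_iff.mp hQsum x hx)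
    obtain rfl : n = p + k - 1 := by omega
    simpa using isAnchored_replicate (d := p) hk

theorem maxPartialSum_chord (d k a m b : ℕ) :
    (b - a : ℤ) * maxPartialSum d k m = (b - m) * maxPartialSum d k a +
      (m - a) * maxPartialSum d k b + (b - a) * (m - a) * (b - m) := by
  simp only [maxPartialSum]
  ring

theorem BetweenAnchors.partialSum_le {d k m : ℕ} {P : List ℕ} (h : BetweenAnchors d k P m) :
    partialSum P m ≤ maxPartialSum d k m := by
  obtain ⟨a, b, ham, hmb, -, -, ha, hb, hchord⟩ := h
  have hba : (0 : ℤ) < b - a := by omega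
  refine le_of_mul_le_mul_left ?_ hba
  rw [hchord, ha, hb, maxPartialSum_chord]
  have : (0 : ℤ) ≤ (m - a) * (b - m) := mul_nonneg (by omega) (by omega)
  nlinarith

theorem partialSum_le_of_anchors_subset {d k : ℕ} {P Q : List ℕ} (hP : P.Pairwise (· ≥ ·))
    (hPa : IsAnchored d k P) (hQa : IsAnchored d k Q) (hPQ : P.sum = Q.sum)
    (hH : ∀ c, 1 ≤ c → c ≤ d →
      partialSum Q c = maxPartialSum d k c → partialSum P c = maxPartialSum d k c)
    (m : ℕ) : partialSum Q m ≤ partialSum P m := by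
  rcases le_or_gt (d + k - 1) m with hm | hm
  · rw [partialSum_of_length_le (hQa.1.trans hm), partialSum_of_length_le (hPa.1.trans hm), hPQ]
  rcases Nat.eq_zero_or_pos m with rfl | hm0
  · simp [partialSum_zero]
  obtain ⟨a, b, ham, hmb, had, hbd, hQa', hQb', hchord⟩ := hQa.2 m hm0 hm.le
  have transfer : ∀ c, (c ≤ d ∨ c = d + k - 1) →
      partialSum Q c = maxPartialSum d k c → partialSum P c = maxPartialSum d k c := by
    rintro c (hcd | rfl) hc
    · rcases Nat.eq_zero_or_pos c with rfl | hc0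
      · simp [partialSum_zero, maxPartialSum_zero]
      · exact hH c hc0 hcd hc
    · rw [partialSum_of_length_le hPa.1, hPQ, ← partialSum_of_length_le hQa.1, hc]
  have hconcave := partialSum_chord_le hP ham.le hmb
  rw [transfer a (.inl had) hQa', transfer b hbd hQb', ← hQa', ← hQb', ← hchord] at hconcave
  exact le_of_mul_le_mul_left hconcave (by omega)

theorem partialSum_eq_maxPartialSum_iff {d k i : ℕ} (hi : i < d) (P : List ℕ) :
    partialSum P (i + 1) = maxPartialSum d k (i + 1) ↔
      (P.take (i + 1)).sum = (i + 1) * (2 * d + k - 2 - i) := by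
  have h : ((2 * d + k - 2 - i : ℕ) : ℤ) = 2 * d + k - 1 - (i + 1) := by omega
  rw [partialSum, maxPartialSum, ← Nat.cast_inj (R := ℤ), Nat.cast_mul, h]
  push_cast
  rfl

theorem stmt_13_general (d k : ℕ) (hk : 1 ≤ k)
    (P Q : List ℕ)
    (hP : IsPartitionList P) (hPsum : P.sum = d * (d + k - 1))
    (hPdiag : ∀ i : ℕ, diagLen P i = Tdk d k i) (hPCI : CICriterion P)
    (hQ : IsPartitionList Q) (hQsum : Q.sum = d * (d + k - 1))
    (hQdiag : ∀ i : ℕ, diagLen Q i = Tdk d k i) (hQCI : CICriterion Q) :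
    (∀ i : ℕ, 1 ≤ i → (Q.take i).sum ≤ (P.take i).sum) ↔
    (∀ i : ℕ, i < d → (Q.take (i + 1)).sum = (i + 1) * (2 * d + k - 2 - i) →
      (P.take (i + 1)).sum = (i + 1) * (2 * d + k - 2 - i)) := by
  have hPa := isAnchored_of_ciCriterion hk hP hPsum hPdiag hPCI
  have hQa := isAnchored_of_ciCriterion hk hQ hQsum hQdiag hQCI
  constructor
  · intro hdom i hi hQi
    rw [← partialSum_eq_maxPartialSum_iff hi] at hQi ⊢
    refine le_antisymm (hPa.2 (i + 1) (by omega) (by omega)).partialSum_le (hQi ▸ ?_)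
    exact Nat.cast_le.mpr (hdom (i + 1) (by omega))
  · intro hH m _
    refine Nat.cast_le.mp (partialSum_le_of_anchors_subset hP.1 hPa hQa (hPsum.trans hQsum.symm)
      (fun c hc1 hcd hc => ?_) m)
    obtain ⟨i, rfl⟩ : ∃ i, c = i + 1 := ⟨c - 1, by omega⟩
    rw [partialSum_eq_maxPartialSum_iff (by omega)] at hc ⊢
    exact hH i (by omega) hc

/-- dominance and vanishing Hessians. For CIJT partitions
`P, Q` of diagonal lengths `T(d,k)`, `Q ≤ P` in the dominance order iff
`H(Q) ⊆ H(P)`, where `H(P) = {i < d : p_1 + ⋯ + p_(i+1) = (i+1)(2d+k-2-i)}`. -/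
theorem stmt_13 (d k : ℕ) (hd : 2 ≤ d) (hk : 1 ≤ k)
    (P Q : List ℕ)
    (hP : IsPartitionList P) (hPsum : P.sum = d * (d + k - 1))
    (hPdiag : ∀ i : ℕ, diagLen P i = Tdk d k i) (hPCI : CICriterion P)
    (hQ : IsPartitionList Q) (hQsum : Q.sum = d * (d + k - 1))
    (hQdiag : ∀ i : ℕ, diagLen Q i = Tdk d k i) (hQCI : CICriterion Q) :
    (∀ i : ℕ, 1 ≤ i → (Q.take i).sum ≤ (P.take i).sum) ↔
    (∀ i : ℕ, i < d → (Q.take (i + 1)).sum = (i + 1) * (2 * d + k - 2 - i) →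
      (P.take (i + 1)).sum = (i + 1) * (2 * d + k - 2 - i)) :=
  stmt_13_general d k hk P Q hP hPsum hPdiag hPCI hQ hQsum hQdiag hQCI
end

section
/- Let d ≥ 2 and k ≥ 1 be integers. Let S_d denote the set of partitions of d(d+k−1) having diagonal lengths T(d,k), satisfying the CI criterion, and having exactly d parts, and let S_{d+k−1} denote the analogous set of such partitions having exactly d+k−1 parts. Then: (a) every P ∈ S_d, written in power form (p_1^{n_1}, …, p_t^{n_t}), satisfies p_t = n_t + k − 1 (so its block of smallest parts is a rectangle (a+k)^{a+1} with a = n_t − 1); (b) the map ι sending such a P to the partition obtained by replacing its n_t parts equal to p_t by p_t parts equal to n_t is a bijection from S_d onto S_{d+k−1}; (c) moreover, if k ≥ 2, then for every P ∈ S_d the set {i ∈ {0,…,d−1} : the sum of the first i+1 parts of ι(P) equals (i+1)(2d+k−2−i)} equals {i ∈ {0,…,d−1} : the sum of the first i+1 parts of P equals (i+1)(2d+k−2−i)} with the element d−1 removed. -/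
open MvPolynomial

/-- The smallest part of a partition list (sorted decreasingly), i.e. its last entry. -/
def minPart (P : List ℕ) : ℕ := P.getLastD 0

/-- The map `ι`: replace the `n_t` parts equal to the smallest part `p_t` by
`p_t` parts equal to `n_t` (conjugate the smallest rectangular block). -/
def iotaMap (P : List ℕ) : List ℕ :=
  P.filter (fun x => x ≠ minPart P) ++ List.replicate (minPart P) (P.count (minPart P))

/-- The set of partitions of `d(d+k-1)` with diagonal lengths `T(d,k)`, satisfying the
CI criterion, and having exactly `len` parts. -/
def ciSet (d k len : ℕ) : Set (List ℕ) :=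
  {P | IsPartitionList P ∧ P.sum = d * (d + k - 1) ∧
    (∀ i : ℕ, diagLen P i = Tdk d k i) ∧ CICriterion P ∧ P.length = len}

/-!
Index the rows of `P = (p_0 ≥ p_1 ≥ ⋯ ≥ p_{L-1})` from `0` and call the numbers `p_r + r` its
shifted parts. Counting cells diagonal by diagonal, `P` has `L` parts and diagonal lengths
`T(d,k)` exactly when its shifted parts are a permutation of the interval `[b, b + L)`, where
`{L, b} = {d, d + k - 1}`.

Write such a `P` as `A ++ q^n`, with `q^n` its block of smallest parts. A pigeonhole argument
on the rows below the one whose shifted part is `b` gives `q + |A| = b`, so the block has the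
shifted parts `[b, b + n)` and `A` is again of the same kind, for the interval `[b + n, b + L)`.
This gives the CI criterion by induction, and (a) when `L = d`. Replacing `q^n` by `n^q` gives
the same situation with `L` and `b` swapped, so `ι` is an involution exchanging the two sets.
For (c): the first `i + 1` shifted parts are distinct and at most `2d + k - 2`, so the first
`i + 1` parts sum to at most `(i + 1)(2d + k - 2 - i)`, with equality only if none of these
shifted parts is below `2d + k - 2 - i`. The first row of the smallest block has shifted
part `d + k - 1` in `P` and `d` in `ι(P)`.
-/

namespace Finset

lemma sum_lt_sum_range_of_mem {s : Finset ℤ} {c x : ℤ} (hs : ∀ y ∈ s, y ≤ c) (hx : x ∈ s)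
    (hxc : x + #s ≤ c) : ∑ y ∈ s, y < ∑ j ∈ range #s, (c - j) := by
  obtain ⟨m, hm⟩ := Nat.exists_eq_add_of_lt (card_pos.2 ⟨x, hx⟩)
  have hle := sum_le_sum_range (s := s.erase x) fun y hy => hs y (mem_of_mem_erase hy)
  rw [card_erase_of_mem hx, hm, Nat.add_sub_cancel] at hle
  rw [← add_sum_erase s _ hx, hm, sum_range_succ]
  rw [hm] at hxc
  push_cast at hxc ⊢
  linarith

end Finset

namespace CIJordanType

open List

lemma sum_add_sum_range_lt_of_nodup {l : List ℕ} {B x : ℕ} (hl : l.Nodup)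
    (hB : ∀ y ∈ l, y < B) (hx : x ∈ l) (hxB : x + l.length < B) :
    l.sum + ∑ j ∈ Finset.range l.length, j + l.length < l.length * B := by
  set s : Finset ℤ := l.toFinset.map Nat.castEmbedding
  have hcard : s.card = l.length := by simp [s, toFinset_card_of_nodup hl]
  have hsum : ∑ y ∈ s, y = (l.sum : ℤ) := by simp [s, sum_toFinset _ hl]
  have hlt := Finset.sum_lt_sum_range_of_mem (s := s) (c := (B : ℤ) - 1) (x := x)
    (fun y hy => by
      obtain ⟨z, hz, rfl⟩ := Finset.mem_map.1 hy
      have := hB z (mem_toFinset.1 hz)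
      simp only [Nat.castEmbedding_apply]
      omega)
    (by simp [s, hx]) (by rw [hcard]; omega)
  rw [hcard, hsum, Finset.sum_sub_distrib, Finset.sum_const, Finset.card_range] at hlt
  simp only [nsmul_eq_mul] at hlt
  zify
  push_cast at hlt ⊢
  linarith

lemma count_add_countP_lt (l : List ℕ) (a : ℕ) :
    l.count a + l.countP (a < ·) = l.countP (a ≤ ·) := by
  induction l with
  | nil => simp
  | cons x l ih =>
    simp only [count_cons, countP_cons, beq_iff_eq, decide_eq_true_eq]
    split_ifs <;> omega

lemma perm_of_countP_lt_eq {l₁ l₂ : List ℕ} (hlen : l₁.length = l₂.length)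
    (h : ∀ i, l₁.countP (i < ·) = l₂.countP (i < ·)) : l₁ ~ l₂ := by
  have hle : ∀ a, l₁.countP (a ≤ ·) = l₂.countP (a ≤ ·) := by
    rintro (_ | a)
    · simpa using hlen
    · simpa [Nat.succ_le_iff] using h a
  refine perm_iff_count.2 fun a => ?_
  have h₁ := count_add_countP_lt l₁ a
  have h₂ := count_add_countP_lt l₂ a
  have := h a
  have := hle a
  omega

lemma countP_lt_range' (b L i : ℕ) :
    (range' b L).countP (i < ·) = min L (b + L - 1 - i) := by
  induction L with
  | zero => simp
  | succ L ih =>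
    rw [range'_concat, countP_append, ih, countP_singleton]
    simp only [decide_eq_true_eq]
    split_ifs <;> omega

def shiftedParts (P : List ℕ) : List ℕ := P.mapIdx fun r p => p + r

@[simp] lemma length_shiftedParts (P : List ℕ) : (shiftedParts P).length = P.length :=
  length_mapIdx

lemma shiftedParts_eq_map_range (P : List ℕ) :
    shiftedParts P = (range P.length).map fun r => P.getD r 0 + r := by
  apply ext_getElem
  · simp [shiftedParts]
  · intro r h _
    simp [shiftedParts, getElem?_eq_getElem (by simpa using h : r < P.length)]

lemma shiftedParts_append_replicate (A : List ℕ) (n q : ℕ) :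
    shiftedParts (A ++ replicate n q) = shiftedParts A ++ range' (q + A.length) n := by
  rw [shiftedParts, mapIdx_append]
  congr 1
  apply ext_getElem
  · simp
  · intro r _ _
    simp only [getElem_mapIdx, getElem_replicate, getElem_range'_1]
    omega

lemma shiftedParts_take (P : List ℕ) (c : ℕ) :
    shiftedParts (P.take c) = (shiftedParts P).take c := by
  apply ext_getElem <;> simp [shiftedParts]

lemma sum_shiftedParts (P : List ℕ) :
    (shiftedParts P).sum = P.sum + ∑ r ∈ Finset.range P.length, r := by
  induction P using reverseRecOn with
  | nil => simp [shiftedParts]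
  | append_singleton P p ih =>
    simp only [shiftedParts, mapIdx_concat, sum_append, length_append, length_singleton,
      Finset.sum_range_succ, sum_singleton] at ih ⊢
    omega

lemma diagLen_add_length_sub_eq_countP (P : List ℕ) (i : ℕ) :
    diagLen P i + (P.length - (i + 1)) = (shiftedParts P).countP (i < ·) := by
  set j := min P.length (i + 1) with hj
  have hdiag : diagLen P i = (range j).countP fun r => i < P.getD r 0 + r := by
    have : (Finset.range (i + 1)).filter (fun r => i - r < P.getD r 0) =
        (Finset.range j).filter fun r => i < P.getD r 0 + r := by
      ext r
      simp only [Finset.mem_filter, Finset.mem_range]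
      rcases lt_or_ge r P.length with hr | hr
      · omega
      · rw [getD_eq_default _ _ hr]; omega
    rw [diagLen, this]
    simp [Finset.card_def, Finset.filter_val, Finset.range_val, Multiset.range,
      countP_eq_length_filter]
  have htail : ((range (P.length - j)).map (j + ·)).countP (fun r => i < P.getD r 0 + r) =
      P.length - (i + 1) := by
    rw [countP_eq_length.2 fun r hr => ?_, length_map, length_range]
    · omega
    · obtain ⟨a, ha, rfl⟩ := mem_map.1 hr
      rw [mem_range] at ha
      simp only [decide_eq_true_eq]
      omega
  have hsplit : range P.length = range j ++ (range (P.length - j)).map (j + ·) := by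
    rw [← range_add, Nat.add_sub_of_le (min_le_left _ _)]
  rw [shiftedParts_eq_map_range, countP_map, hsplit, countP_append, hdiag]
  exact congrArg _ htail.symm

lemma Tdk_add_sub_eq_min {d k L b : ℕ} (hLb : L + b = 2 * d + k - 1)
    (hmin : min L b = d) (i : ℕ) : Tdk d k i + (L - (i + 1)) = min L (b + L - 1 - i) := by
  unfold Tdk; split <;> omega

lemma diagLen_eq_Tdk_iff {d k b : ℕ} {P : List ℕ}
    (hLb : P.length + b = 2 * d + k - 1) (hmin : min P.length b = d) :
    (∀ i, diagLen P i = Tdk d k i) ↔ shiftedParts P ~ range' b P.length := by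
  have key : ∀ i, diagLen P i = Tdk d k i ↔
      (shiftedParts P).countP (i < ·) = (range' b P.length).countP (i < ·) := fun i => by
    rw [← diagLen_add_length_sub_eq_countP, countP_lt_range', ← Tdk_add_sub_eq_min hLb hmin]
    omega
  exact ⟨fun h => perm_of_countP_lt_eq (by simp) fun i => (key i).1 (h i),
    fun h i => (key i).2 (h.countP_eq _)⟩

lemma exists_eq_append_replicate {P : List ℕ} (hs : P.Pairwise (· ≥ ·)) (hne : P ≠ []) :
    ∃ A n q, P = A ++ replicate n q ∧ 0 < n ∧ ∀ a ∈ A, q < a := by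
  induction P with
  | nil => exact absurd rfl hne
  | cons p P ih =>
    rcases eq_or_ne P [] with rfl | hP
    · exact ⟨[], 1, p, rfl, one_pos, by simp⟩
    obtain ⟨A, n, q, rfl, hn, hq⟩ := ih hs.of_cons hP
    have hqp : q ≤ p := (pairwise_cons.1 hs).1 q (by simp [hn.ne'])
    rcases hqp.lt_or_eq with hlt | rfl
    · exact ⟨p :: A, n, q, rfl, hn, forall_mem_cons.2 ⟨hlt, hq⟩⟩
    · have hA : A = [] := eq_nil_iff_forall_not_mem.2 fun a ha =>
        (hq a ha).not_ge ((pairwise_cons.1 hs).1 a (mem_append_left _ ha))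
      exact ⟨[], n + 1, q, by simp [hA, replicate_succ], n.succ_pos, by simp⟩

lemma le_of_mem_append_replicate {A : List ℕ} {n q x : ℕ} (hq : ∀ a ∈ A, q < a)
    (hx : x ∈ A ++ replicate n q) : q ≤ x := by
  rcases mem_append.1 hx with hx | hx
  · exact (hq x hx).le
  · exact (eq_of_mem_replicate hx).ge

lemma count_append_replicate_of_lt {A : List ℕ} {n q x : ℕ} (hx : q < x) :
    (A ++ replicate n q).count x = A.count x := by
  simp [count_replicate, hx.ne]

lemma lt_add_length_of_perm {A : List ℕ} {c a : ℕ} (h : shiftedParts A ~ range' c A.length)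
    (ha : a ∈ A) : c < a + A.length := by
  obtain ⟨r, hr, rfl⟩ := mem_iff_getElem.1 ha
  have := (mem_range'_1.1 (h.subset (getElem_mem (l := shiftedParts A) (by simpa using hr)))).1
  simp only [shiftedParts, getElem_mapIdx] at this
  omega

lemma mem_take_shiftedParts_append_replicate {A : List ℕ} {n q c : ℕ} (hn : 0 < n)
    (hc : A.length < c) : q + A.length ∈ (shiftedParts (A ++ replicate n q)).take c :=
  mem_take_iff_getElem.2 ⟨A.length, lt_min hc (by simp [hn]), by simp [shiftedParts]⟩

section Block

variable {A : List ℕ} {n q b : ℕ}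

lemma minPart_append_replicate (hn : 0 < n) : minPart (A ++ replicate n q) = q := by
  obtain ⟨n, rfl⟩ := Nat.exists_eq_add_of_lt hn
  simp [minPart, replicate_succ', ← append_assoc]

lemma count_append_replicate (hq : ∀ a ∈ A, q < a) : (A ++ replicate n q).count q = n := by
  rw [count_append, count_replicate_self, count_eq_zero.2 fun h => (hq q h).false, zero_add]

lemma iotaMap_append_replicate (hn : 0 < n) (hq : ∀ a ∈ A, q < a) :
    iotaMap (A ++ replicate n q) = A ++ replicate q n := by
  rw [iotaMap, minPart_append_replicate hn, count_append_replicate hq, filter_append,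
    filter_eq_self.2 fun a ha => by simpa using (hq a ha).ne',
    filter_eq_nil_iff.2 fun a ha => by simp [eq_of_mem_replicate ha], append_nil]

lemma add_length_eq_of_perm (hA : A.Pairwise (· ≥ ·)) (hq : ∀ a ∈ A, q < a) (hn : 0 < n)
    (h : shiftedParts (A ++ replicate n q) ~ range' b (A.length + n)) : q + A.length = b := by
  rw [shiftedParts_append_replicate] at h
  set m := A.length
  have hbound : ∀ x ∈ shiftedParts A ++ range' (q + m) n, b ≤ x ∧ x < b + (m + n) :=
    fun x hx => mem_range'_1.1 (h.subset hx)
  have hle : b ≤ q + m := (hbound _ (mem_append_right _ (by simp [hn]))).1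
  by_contra hne
  have hb : b ∈ shiftedParts A := by
    rcases mem_append.1 (h.symm.subset (mem_range'_1.2 ⟨le_rfl, by omega⟩)) with hb | hb
    · exact hb
    · exact absurd (mem_range'_1.1 hb).1 (by omega)
  obtain ⟨r, hr, hbr⟩ := mem_iff_getElem.1 hb
  simp only [shiftedParts, length_mapIdx, getElem_mapIdx] at hr hbr
  have hqr := hq _ (getElem_mem hr)
  -- pigeonhole: the `m + n - r` rows from row `r` on would need distinct shifted parts
  -- in `[b, b + m + n - r - 1)`
  set S := (shiftedParts A).drop r ++ range' (q + m) n
  have hSsub : S <+ shiftedParts A ++ range' (q + m) n := (drop_sublist _ _).append_right _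
  have hSin : S ⊆ range' b (m + n - r - 1) := by
    intro x hx
    refine mem_range'_1.2 ⟨(hbound x (hSsub.subset hx)).1, ?_⟩
    rcases mem_append.1 hx with hx | hx
    · obtain ⟨t, ht, rfl⟩ := mem_iff_getElem.1 hx
      simp only [shiftedParts, length_drop, length_mapIdx, getElem_drop, getElem_mapIdx] at ht ⊢
      have := hA.sortedGE.getElem_ge_getElem_of_le (i := r + t) (j := r) (hi := by omega)
        (hj := hr) (by omega)
      omega
    · have := (mem_range'_1.1 hx).2
      omega
  have := (((h.nodup_iff.2 nodup_range').sublist hSsub).subperm hSin).length_le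
  simp only [S, length_append, length_drop, length_shiftedParts, length_range'] at this
  omega

lemma perm_of_append_replicate (hA : A.Pairwise (· ≥ ·)) (hq : ∀ a ∈ A, q < a) (hn : 0 < n)
    (h : shiftedParts (A ++ replicate n q) ~ range' b (A.length + n)) :
    shiftedParts A ~ range' (b + n) A.length := by
  have hb := add_length_eq_of_perm hA hq hn h
  rw [shiftedParts_append_replicate, hb, Nat.add_comm A.length n, ← range'_append_1] at h
  exact (perm_append_right_iff _).1 (h.trans perm_append_comm)

lemma append_replicate_perm_of_perm (h : shiftedParts A ~ range' (q + A.length + n) A.length) :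
    shiftedParts (A ++ replicate q n) ~ range' (A.length + n) (A.length + q) := by
  rw [shiftedParts_append_replicate, Nat.add_comm A.length q, ← range'_append_1,
    Nat.add_comm n]
  refine perm_append_comm.trans ((perm_append_left_iff _).2 ?_)
  rwa [show A.length + n + q = q + A.length + n by omega]

end Block

lemma exists_block_decomposition {P : List ℕ} {b : ℕ} (hs : P.Pairwise (· ≥ ·)) (hne : P ≠ [])
    (h : shiftedParts P ~ range' b P.length) :
    ∃ A n q, P = A ++ replicate n q ∧ 0 < n ∧ q + A.length = b ∧ (∀ a ∈ A, q + n < a) ∧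
      A.Pairwise (· ≥ ·) ∧ shiftedParts A ~ range' (b + n) A.length := by
  obtain ⟨A, n, q, rfl, hn, hq⟩ := exists_eq_append_replicate hs hne
  have hA := hs.sublist (sublist_append_left _ _)
  rw [length_append, length_replicate] at h
  have hb := add_length_eq_of_perm hA hq hn h
  have hAperm := perm_of_append_replicate hA hq hn h
  refine ⟨A, n, q, rfl, hn, hb, fun a ha => ?_, hA, hAperm⟩
  have := lt_add_length_of_perm hAperm ha
  omega

theorem ciCriterion_of_perm {P : List ℕ} {b : ℕ} (hs : P.Pairwise (· ≥ ·))
    (h : shiftedParts P ~ range' b P.length) : CICriterion P := by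
  induction hL : P.length using Nat.strong_induction_on generalizing P b with
  | _ L ih =>
  rcases eq_or_ne P [] with rfl | hne
  · intro a c ha; simp at ha
  obtain ⟨A, n, q, rfl, hn, hb, hqA, hA, hAperm⟩ := exists_block_decomposition hs hne h
  have hq : ∀ a ∈ A, q < a := fun a ha => by have := hqA a ha; omega
  intro a c ha hc hca hadj
  have haA : a ∈ A := by
    rcases mem_append.1 ha with ha | ha
    · exact ha
    · have := le_of_mem_append_replicate hq hc
      rw [eq_of_mem_replicate ha] at hca
      omega
  rcases (le_of_mem_append_replicate hq hc).lt_or_eq with hqc | rfl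
  · have hcA : c ∈ A :=
      (mem_append.1 hc).resolve_right fun hc => hqc.ne (eq_of_mem_replicate hc).symm
    rw [count_append_replicate_of_lt (hqc.trans hca), count_append_replicate_of_lt hqc]
    refine ih A.length ?_ hA hAperm rfl a c haA hcA hca fun x hx => hadj x (mem_append_left _ hx)
    rw [← hL, length_append, length_replicate]
    omega
  · -- `a` is the smallest part of `A`
    obtain ⟨A', n', q', rfl, hn', hb', hqA', -, -⟩ :=
      exists_block_decomposition hA (ne_nil_of_mem haA) hAperm
    have hq' : ∀ x ∈ A', q' < x := fun x hx => by have := hqA' x hx; omega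
    have hq'mem : q' ∈ A' ++ replicate n' q' := by simp [hn'.ne']
    have hqq' : q < q' := hq _ hq'mem
    obtain rfl : a = q' := le_antisymm
      ((hadj q' (mem_append_left _ hq'mem)).resolve_left (by omega))
      (le_of_mem_append_replicate hq' haA)
    rw [count_append_replicate_of_lt hqq', count_append_replicate hq', count_append_replicate hq]
    rw [length_append, length_replicate] at hb
    omega

lemma sum_take_lt_of_perm {P : List ℕ} {b c x : ℕ} (h : shiftedParts P ~ range' b P.length)
    (hc : c ≤ P.length) (hx : x ∈ (shiftedParts P).take c) (hxc : x + c < b + P.length) :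
    (P.take c).sum < c * (b + P.length - c) := by
  set l := (shiftedParts P).take c with hl_def
  have hl : l.Nodup := (h.nodup_iff.2 nodup_range').sublist (take_sublist _ _)
  have hB : ∀ y ∈ l, y < b + P.length :=
    fun y hy => (mem_range'_1.1 (h.subset (mem_of_mem_take hy))).2
  have hlen : l.length = c := by simp [l, hc]
  have hlt := sum_add_sum_range_lt_of_nodup hl hB hx (by omega)
  rw [hlen, hl_def, ← shiftedParts_take, sum_shiftedParts, length_take, min_eq_left hc] at hlt
  have hgauss := Finset.sum_range_id_mul_two c
  have hsq : c * (c - 1) + c = c * c := by cases c <;> simp [Nat.mul_succ]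
  rw [Nat.mul_sub]
  omega

section CISet

variable {d k L b : ℕ} {P : List ℕ}

lemma mem_ciSet_iff (hLb : L + b = 2 * d + k - 1) (hmin : min L b = d) :
    P ∈ ciSet d k L ↔ IsPartitionList P ∧ P.sum = d * (d + k - 1) ∧
      P.length = L ∧ shiftedParts P ~ range' b P.length := by
  constructor
  · rintro ⟨hP, hsum, hdiag, -, rfl⟩
    exact ⟨hP, hsum, rfl, (diagLen_eq_Tdk_iff hLb hmin).1 hdiag⟩
  · rintro ⟨hP, hsum, rfl, hperm⟩
    exact ⟨hP, hsum, (diagLen_eq_Tdk_iff hLb hmin).2 hperm, ciCriterion_of_perm hP.1 hperm, rfl⟩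

lemma iotaMap_mem_ciSet (hd : 0 < d) (hLb : L + b = 2 * d + k - 1)
    (hmin : min L b = d) (hP : P ∈ ciSet d k L) : iotaMap P ∈ ciSet d k b := by
  obtain ⟨⟨hs, hpos⟩, hsum, hlen, hperm⟩ := (mem_ciSet_iff hLb hmin).1 hP
  obtain ⟨A, n, q, rfl, hn, rfl, hqA, hA, hAperm⟩ :=
    exists_block_decomposition hs (ne_nil_of_length_pos (by omega)) hperm
  rw [iotaMap_append_replicate hn fun a ha => by have := hqA a ha; omega]
  rw [length_append, length_replicate] at hlen
  refine (mem_ciSet_iff (L := q + A.length) (b := L) (by omega) (by omega)).2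
    ⟨⟨?_, ?_⟩, ?_, by rw [length_append, length_replicate, Nat.add_comm], ?_⟩
  · refine pairwise_append.2 ⟨hA, pairwise_replicate.2 (Or.inr le_rfl), fun a ha y hy => ?_⟩
    have := hqA a ha
    rw [eq_of_mem_replicate hy]
    omega
  · simp only [mem_append, mem_replicate]
    rintro p (hp | ⟨-, rfl⟩)
    · exact hpos p (mem_append_left _ hp)
    · exact hn
  · simpa [Nat.mul_comm] using hsum
  · simpa [← hlen, Nat.add_comm] using append_replicate_perm_of_perm hAperm

lemma iotaMap_iotaMap (hd : 0 < d) (hLb : L + b = 2 * d + k - 1)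
    (hmin : min L b = d) (hP : P ∈ ciSet d k L) : iotaMap (iotaMap P) = P := by
  obtain ⟨⟨hs, hpos⟩, -, hlen, hperm⟩ := (mem_ciSet_iff hLb hmin).1 hP
  obtain ⟨A, n, q, rfl, hn, -, hqA, -, -⟩ :=
    exists_block_decomposition hs (ne_nil_of_length_pos (by omega)) hperm
  have hq : 0 < q := hpos q (by simp [hn.ne'])
  rw [iotaMap_append_replicate hn fun a ha => by have := hqA a ha; omega,
    iotaMap_append_replicate hq fun a ha => by have := hqA a ha; omega]

lemma minPart_eq_count_add (hk : 1 ≤ k) (hd : 0 < d) (hP : P ∈ ciSet d k d) :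
    minPart P = P.count (minPart P) + k - 1 := by
  obtain ⟨⟨hs, -⟩, -, hlen, hperm⟩ :=
    (mem_ciSet_iff (b := d + k - 1) (by omega) (by omega)).1 hP
  obtain ⟨A, n, q, rfl, hn, hb, hqA, -, -⟩ :=
    exists_block_decomposition hs (ne_nil_of_length_pos (by omega)) hperm
  rw [minPart_append_replicate hn, count_append_replicate fun a ha => by have := hqA a ha; omega]
  rw [length_append, length_replicate] at hlen
  omega

lemma sum_take_iotaMap_eq_iff (hk : 2 ≤ k) (hP : P ∈ ciSet d k d) {i : ℕ} (hi : i < d) :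
    ((iotaMap P).take (i + 1)).sum = (i + 1) * (2 * d + k - 2 - i) ↔
      (P.take (i + 1)).sum = (i + 1) * (2 * d + k - 2 - i) ∧ i ≠ d - 1 := by
  have hQ := (mem_ciSet_iff (L := d + k - 1) (b := d) (by omega) (by omega)).1
    (iotaMap_mem_ciSet (by omega) (by omega) (by omega) hP)
  obtain ⟨⟨hs, hpos⟩, -, hlen, hperm⟩ :=
    (mem_ciSet_iff (b := d + k - 1) (by omega) (by omega)).1 hP
  obtain ⟨A, n, q, rfl, hn, hb, hqA, -, -⟩ :=
    exists_block_decomposition hs (ne_nil_of_length_pos (by omega)) hperm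
  have hq : 0 < q := hpos q (by simp [hn.ne'])
  rw [iotaMap_append_replicate hn fun a ha => by have := hqA a ha; omega] at hQ ⊢
  obtain ⟨-, -, hQlen, hQperm⟩ := hQ
  have hm : A.length + n = d := by simpa using hlen
  by_cases hc : i + 1 ≤ A.length
  · rw [take_append_of_le_length hc, take_append_of_le_length hc]
    exact ⟨fun h => ⟨h, by omega⟩, And.left⟩
  · have hQlt := sum_take_lt_of_perm (c := i + 1) hQperm (by omega)
      (mem_take_shiftedParts_append_replicate (A := A) (q := n) hq (by omega)) (by omega)
    rw [hQlen, show d + (d + k - 1) - (i + 1) = 2 * d + k - 2 - i by omega] at hQlt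
    refine iff_of_false hQlt.ne fun ⟨hPeq, hid⟩ => ?_
    have hPlt := sum_take_lt_of_perm (c := i + 1) hperm (by omega)
      (mem_take_shiftedParts_append_replicate (A := A) hn (by omega)) (by omega)
    rw [hlen, show d + k - 1 + d - (i + 1) = 2 * d + k - 2 - i by omega] at hPlt
    exact hPlt.ne hPeq

end CISet

end CIJordanType

open CIJordanType

/-- (a) For a CIJT partition with `d` parts, the smallest part
equals its multiplicity plus `k - 1`. (b) The map `ι` (conjugating the smallest
rectangular block) is a bijection from the CIJT partitions with `d` parts onto
those with `d + k - 1` parts. (c) If `k ≥ 2`, the nonvanishing Hessian index set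
of `ι(P)` is that of `P` with `d - 1` removed. -/
theorem stmt_14 (d k : ℕ) (hd : 2 ≤ d) (hk : 1 ≤ k) :
    (∀ P ∈ ciSet d k d, minPart P = P.count (minPart P) + k - 1) ∧
    Set.BijOn iotaMap (ciSet d k d) (ciSet d k (d + k - 1)) ∧
    (2 ≤ k → ∀ P ∈ ciSet d k d, ∀ i : ℕ, i < d →
      (((iotaMap P).take (i + 1)).sum = (i + 1) * (2 * d + k - 2 - i) ↔
        ((P.take (i + 1)).sum = (i + 1) * (2 * d + k - 2 - i) ∧ i ≠ d - 1))) := by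
  have hd' : 0 < d := by omega
  have hLb : d + (d + k - 1) = 2 * d + k - 1 := by omega
  have hbL : d + k - 1 + d = 2 * d + k - 1 := by omega
  have hmin : min d (d + k - 1) = d := by omega
  have hmin' : min (d + k - 1) d = d := by omega
  refine ⟨fun P hP => minPart_eq_count_add hk hd' hP, ?_,
    fun hk2 P hP i hi => sum_take_iotaMap_eq_iff hk2 hP hi⟩
  exact Set.InvOn.bijOn
    ⟨fun P hP => iotaMap_iotaMap hd' hLb hmin hP,
      fun Q hQ => iotaMap_iotaMap hd' hbL hmin' hQ⟩
    (fun P hP => iotaMap_mem_ciSet hd' hLb hmin hP)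
    (fun Q hQ => iotaMap_mem_ciSet hd' hbL hmin' hQ)
end

section
/- Let d ≥ 2 and k ≥ 1 be integers. If k ≥ 2, then the number of partitions of d(d+k−1) having diagonal lengths T(d,k), satisfying the CI criterion, and having exactly d parts is 2^{d−1}, and the number of such partitions having exactly d+k−1 parts is also 2^{d−1}. If k = 1, then every partition of d² having diagonal lengths T(d,1) and satisfying the CI criterion has exactly d parts, and the number of such partitions is 2^{d−1}. -/
/-!
Row `r` of a partition `P = (p₁ ≥ ⋯ ≥ pₙ > 0)` meets the diagonals `r, …, r + p_{r+1} - 1`.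
The CI criterion is equivalent to the row ends `r + p_{r+1}` forming an interval `[a, a + n)`:
the rows of a block of equal parts have consecutive row ends, and the criterion says that the
block of the next smaller part ends exactly where the current one starts. For such a partition
the `i`-th diagonal length is `min(i + 1, n) - #{row ends ≤ i}`, and comparing with `T(d,k)`
forces `(n, a) = (d, d + k - 1)` or `(d + k - 1, d)`. Conversely, a partition with interval row
ends is determined by `a` and the multiplicities of its parts read from the smallest one up,
which can be any composition of `n` whose first entry exceeds `n - a`. For `n = d` these are all
`2^(d-1)` compositions of `d`; for `n = d + k - 1` they arise from the compositions of `d` by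
adding `k - 1` to the first entry.
-/

open MvPolynomial

namespace CIPartition

open Finset

section Lists

variable {P : List ℕ}

theorem getD_antitone (hP : P.Pairwise (· ≥ ·)) {r s : ℕ} (hrs : r ≤ s) :
    P.getD s 0 ≤ P.getD r 0 := by
  rcases hrs.eq_or_lt with rfl | hlt
  · exact le_rfl
  by_cases hs : s < P.length
  · rw [List.getD_eq_getElem _ _ hs, List.getD_eq_getElem _ _ (hlt.trans hs)]
    exact hP.rel_get_of_lt (a := ⟨r, hlt.trans hs⟩) (b := ⟨s, hs⟩) hlt
  · rw [List.getD_eq_default _ _ (not_lt.mp hs)]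
    exact Nat.zero_le _

theorem getD_pos_iff (hP : ∀ p ∈ P, 0 < p) (r : ℕ) : 0 < P.getD r 0 ↔ r < P.length := by
  refine ⟨fun h => ?_, fun h => ?_⟩
  · by_contra hr
    rw [List.getD_eq_default _ _ (not_lt.mp hr)] at h
    exact h.false
  · rw [List.getD_eq_getElem _ _ h]
    exact hP _ (List.getElem_mem h)

theorem exists_eq_append_replicate (hP : P.Pairwise (· ≥ ·)) (hne : P ≠ []) :
    ∃ Q m p, 0 < m ∧ (∀ x ∈ Q, p < x) ∧ P = Q ++ List.replicate m p := by
  induction P with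
  | nil => exact absurd rfl hne
  | cons x P ih =>
    rw [List.pairwise_cons] at hP
    rcases eq_or_ne P [] with rfl | hP'
    · exact ⟨[], 1, x, one_pos, by simp, rfl⟩
    obtain ⟨Q, m, p, hm, hQp, rfl⟩ := ih hP.2 hP'
    have hpx : p ≤ x := hP.1 p (by simp [hm.ne'])
    rcases hpx.lt_or_eq with hlt | rfl
    · exact ⟨x :: Q, m, p, hm, by simpa [hlt] using hQp, rfl⟩
    · obtain rfl : Q = [] := List.eq_nil_iff_forall_not_mem.mpr fun y hy =>
        (hQp y hy).not_ge (hP.1 y (by simp [hy]))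
      exact ⟨[], m + 1, p, m.succ_pos, by simp, by simp [List.replicate_succ]⟩

theorem sum_tail_le (L : List ℕ) : L.tail.sum ≤ L.sum :=
  (List.tail_sublist L).sum_le_sum fun _ _ => Nat.zero_le _

theorem sum_tail_lt (hP : ∀ m ∈ P, 0 < m) (hne : P ≠ []) : P.tail.sum < P.sum := by
  obtain _ | ⟨m, T⟩ := P
  · exact absurd rfl hne
  · simpa using hP m List.mem_cons_self

theorem modifyHead_injective {f : ℕ → ℕ} (hf : Function.Injective f) :
    Function.Injective (List.modifyHead f) := by
  rintro (_ | ⟨x, l⟩) (_ | ⟨y, l'⟩) h <;> simp_all [hf.eq_iff]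

end Lists

/-- Row `r` of the Ferrers diagram of `P` meets exactly the diagonals `r, …, rowEnd P r - 1`. -/
def rowEnd (P : List ℕ) (r : ℕ) : ℕ := r + P.getD r 0

def RowEndsInterval (P : List ℕ) (a : ℕ) : Prop :=
  (range P.length).image (rowEnd P) = Ico a (a + P.length)

section RowEnd

variable {P Q : List ℕ} {m p a : ℕ}

theorem rowEnd_succ_le (hP : P.Pairwise (· ≥ ·)) (r : ℕ) : rowEnd P (r + 1) ≤ rowEnd P r + 1 := by
  have := getD_antitone hP (Nat.le_add_right r 1)
  simp only [rowEnd]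
  omega

theorem rowEnd_append_of_lt {R : List ℕ} {r : ℕ} (hr : r < Q.length) :
    rowEnd (Q ++ R) r = rowEnd Q r := by
  rw [rowEnd, rowEnd, List.getD_append _ _ _ _ hr]

theorem rowEnd_append_replicate {j : ℕ} (hj : j < m) :
    rowEnd (Q ++ List.replicate m p) (Q.length + j) = Q.length + j + p := by
  simp [rowEnd, List.getD_eq_getElem?_getD, hj]

theorem image_rowEnd_append_replicate :
    (range (Q ++ List.replicate m p).length).image (rowEnd (Q ++ List.replicate m p)) =
      (range Q.length).image (rowEnd Q) ∪ Ico (Q.length + p) (Q.length + p + m) := by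
  ext x
  simp only [mem_image, mem_range, mem_union, mem_Ico, List.length_append,
    List.length_replicate]
  constructor
  · rintro ⟨r, hr, rfl⟩
    rcases lt_or_ge r Q.length with hrQ | hrQ
    · exact .inl ⟨r, hrQ, (rowEnd_append_of_lt hrQ).symm⟩
    · obtain ⟨j, rfl⟩ := Nat.exists_eq_add_of_le hrQ
      rw [rowEnd_append_replicate (by omega)]
      omega
  · rintro (⟨r, hr, rfl⟩ | hx)
    · exact ⟨r, by omega, rowEnd_append_of_lt hr⟩
    · refine ⟨Q.length + (x - Q.length - p), by omega, ?_⟩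
      rw [rowEnd_append_replicate (by omega)]
      omega

theorem RowEndsInterval.injOn (h : RowEndsInterval P a) :
    Set.InjOn (rowEnd P) (range P.length) :=
  injOn_of_card_image_eq (by rw [h, Nat.card_Ico, card_range]; omega)

theorem RowEndsInterval.append_replicate (hm : 0 < m) (hQ : RowEndsInterval Q (a + m))
    (hpa : p + Q.length = a) : RowEndsInterval (Q ++ List.replicate m p) a := by
  subst hpa
  rw [RowEndsInterval, image_rowEnd_append_replicate, hQ, union_comm, add_comm Q.length p,
    Ico_union_Ico_eq_Ico (by omega) (by omega)]
  simp only [List.length_append, List.length_replicate]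
  congr 1
  omega

/-- The row ends of `Q` cannot enter the block `[|Q| + p, |Q| + p + m)` occupied by the bottom
rows, and they drop by at most one from row to row, so they all stay above that block. -/
theorem RowEndsInterval.add_le_rowEnd (hQ : Q.Pairwise (· ≥ ·)) (hQp : ∀ x ∈ Q, p < x)
    (hm : 0 < m) (h : RowEndsInterval (Q ++ List.replicate m p) a) {r : ℕ} (hr : r < Q.length) :
    Q.length + p + m ≤ rowEnd Q r := by
  have havoid : ∀ s < Q.length, Q.length + p ≤ rowEnd Q s → Q.length + p + m ≤ rowEnd Q s := by
    intro s hs hle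
    by_contra! hlt
    have hbot := rowEnd_append_replicate (Q := Q) (p := p)
      (show rowEnd Q s - Q.length - p < m by omega)
    have := h.injOn (by simp; omega) (by simp; omega)
      ((rowEnd_append_of_lt hs).trans (hbot.trans (by omega)).symm)
    omega
  have hQne : 0 < Q.length := by omega
  have hr' : r ≤ Q.length - 1 := by omega
  clear hr
  induction hr' using Nat.decreasingInduction with
  | self =>
    apply havoid _ (by omega)
    have hmem : Q.getD (Q.length - 1) 0 ∈ Q := by
      rw [List.getD_eq_getElem _ _ (by omega)]
      exact List.getElem_mem _
    have := hQp _ hmem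
    simp only [rowEnd]
    omega
  | of_succ s hs ih =>
    have := rowEnd_succ_le hQ s
    exact havoid s (by omega) (by omega)

theorem RowEndsInterval.of_append_replicate (hQ : Q.Pairwise (· ≥ ·)) (hQp : ∀ x ∈ Q, p < x)
    (hm : 0 < m) (h : RowEndsInterval (Q ++ List.replicate m p) a) :
    p + Q.length = a ∧ RowEndsInterval Q (a + m) := by
  have hsplit := image_rowEnd_append_replicate (Q := Q) (m := m) (p := p)
  rw [h, List.length_append, List.length_replicate] at hsplit
  have hQhigh : ∀ x ∈ (range Q.length).image (rowEnd Q), Q.length + p + m ≤ x := by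
    simp only [mem_image, mem_range]
    rintro _ ⟨r, hr, rfl⟩
    exact h.add_le_rowEnd hQ hQp hm hr
  have hstart : p + Q.length = a := by
    have ha : a ∈ Ico a (a + (Q.length + m)) := by simp; omega
    have hbot : Q.length + p ∈ Ico a (a + (Q.length + m)) := by rw [hsplit]; simp; omega
    rw [hsplit, mem_union] at ha
    rw [mem_Ico] at hbot
    rcases ha with ha | ha
    · have := hQhigh a ha; omega
    · rw [mem_Ico] at ha; omega
  refine ⟨hstart, ?_⟩
  subst hstart
  have hdisj :
      Disjoint ((range Q.length).image (rowEnd Q)) (Ico (Q.length + p) (Q.length + p + m)) :=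
    disjoint_left.mpr fun x hx hx' => by have := hQhigh x hx; rw [mem_Ico] at hx'; omega
  rw [RowEndsInterval, ← union_sdiff_cancel_right hdisj, ← hsplit, add_comm p, Ico_sdiff_Ico_left]
  congr 1 <;> omega

theorem rowEndsInterval_append_replicate_iff (hQ : Q.Pairwise (· ≥ ·)) (hQp : ∀ x ∈ Q, p < x)
    (hm : 0 < m) :
    RowEndsInterval (Q ++ List.replicate m p) a ↔ p + Q.length = a ∧ RowEndsInterval Q (a + m) :=
  ⟨RowEndsInterval.of_append_replicate hQ hQp hm, fun h => h.2.append_replicate hm h.1⟩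

end RowEnd

section Criterion

variable {Q : List ℕ} {m p : ℕ}

theorem mem_append_replicate_iff (hm : 0 < m) {x : ℕ} :
    x ∈ Q ++ List.replicate m p ↔ x ∈ Q ∨ x = p := by
  simp [hm.ne']

theorem count_append_replicate_of_mem (hQp : ∀ x ∈ Q, p < x) {x : ℕ} (hx : x ∈ Q) :
    (Q ++ List.replicate m p).count x = Q.count x := by
  simp [List.count_replicate, (hQp x hx).ne]

theorem count_append_replicate_self (hQp : ∀ x ∈ Q, p < x) :
    (Q ++ List.replicate m p).count p = m := by
  rw [List.count_append, List.count_eq_zero.mpr fun h => (hQp p h).false,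
    List.count_replicate_self, zero_add]

theorem ciCriterion_append_replicate_iff (hQp : ∀ x ∈ Q, p < x) (hm : 0 < m) :
    CICriterion (Q ++ List.replicate m p) ↔
      CICriterion Q ∧ ∀ q ∈ Q, (∀ x ∈ Q, q ≤ x) → q = Q.count q + m + p := by
  have hQ : ∀ {x}, x ∈ Q → x ∈ Q ++ List.replicate m p := fun hx =>
    (mem_append_replicate_iff hm).2 (.inl hx)
  have hpP : p ∈ Q ++ List.replicate m p := (mem_append_replicate_iff hm).2 (.inr rfl)
  constructor
  · intro h
    refine ⟨fun a b ha hb hba hadj => ?_, fun q hq hmin => ?_⟩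
    · have := h a b (hQ ha) (hQ hb) hba fun x hx => by
        rcases (mem_append_replicate_iff hm).1 hx with hx | rfl
        · exact hadj x hx
        · exact .inl (hQp b hb).le
      rwa [count_append_replicate_of_mem hQp ha, count_append_replicate_of_mem hQp hb] at this
    · have := h q p (hQ hq) hpP (hQp q hq) fun x hx => by
        rcases (mem_append_replicate_iff hm).1 hx with hx | rfl
        · exact .inr (hmin x hx)
        · exact .inl le_rfl
      rwa [count_append_replicate_of_mem hQp hq, count_append_replicate_self hQp] at this
  · rintro ⟨hCI, hmin⟩ a b ha hb hba hadj
    rcases (mem_append_replicate_iff hm).1 ha with haQ | rfl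
    · rw [count_append_replicate_of_mem hQp haQ]
      rcases (mem_append_replicate_iff hm).1 hb with hbQ | rfl
      · rw [count_append_replicate_of_mem hQp hbQ]
        exact hCI a b haQ hbQ hba fun x hx => hadj x (hQ hx)
      · rw [count_append_replicate_self hQp]
        exact hmin a haQ fun x hx => (hadj x (hQ hx)).resolve_left (hQp x hx).not_ge
    · rcases (mem_append_replicate_iff hm).1 hb with hbQ | rfl
      · exact absurd (hQp b hbQ) hba.not_gt
      · exact absurd hba (lt_irrefl _)

theorem forall_min_append_replicate_iff (hQp : ∀ x ∈ Q, p < x) (hm : 0 < m) (c e : ℕ) :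
    (∀ q ∈ Q ++ List.replicate m p, (∀ x ∈ Q ++ List.replicate m p, q ≤ x) →
      q = (Q ++ List.replicate m p).count q + c + e) ↔ p = m + c + e := by
  have hpP : p ∈ Q ++ List.replicate m p := (mem_append_replicate_iff hm).2 (.inr rfl)
  have hmin : ∀ x ∈ Q ++ List.replicate m p, p ≤ x := fun x hx => by
    rcases (mem_append_replicate_iff hm).1 hx with hx | rfl
    exacts [(hQp x hx).le, le_rfl]
  refine ⟨fun h => by simpa [count_append_replicate_self hQp] using h p hpP hmin,
    fun h q hq hqmin => ?_⟩
  obtain rfl : q = p := le_antisymm (hqmin p hpP) (hmin q hq)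
  rwa [count_append_replicate_self hQp]

end Criterion

theorem exists_rowEndsInterval_append_replicate_iff {Q : List ℕ} {m p : ℕ}
    (hQ : Q.Pairwise (· ≥ ·)) (hQp : ∀ x ∈ Q, p < x) (hm : 0 < m) :
    (∃ a, RowEndsInterval (Q ++ List.replicate m p) a) ↔
      RowEndsInterval Q (p + Q.length + m) := by
  simp only [rowEndsInterval_append_replicate_iff hQ hQp hm, exists_eq_left']

theorem ciCriterion_iff_exists_rowEndsInterval {P : List ℕ} (hP : P.Pairwise (· ≥ ·)) :
    CICriterion P ↔ ∃ a, RowEndsInterval P a := by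
  induction hn : P.length using Nat.strong_induction_on generalizing P with
  | _ n ih =>
  subst hn
  rcases eq_or_ne P [] with rfl | hne
  · exact ⟨fun _ => ⟨0, rfl⟩, fun _ => by simp [CICriterion]⟩
  obtain ⟨Q, m, p, hm, hQp, rfl⟩ := exists_eq_append_replicate hP hne
  have hQ : Q.Pairwise (· ≥ ·) := hP.sublist (List.sublist_append_left _ _)
  rw [ciCriterion_append_replicate_iff hQp hm,
    exists_rowEndsInterval_append_replicate_iff hQ hQp hm]
  rcases eq_or_ne Q [] with rfl | hQne
  · simp [CICriterion, RowEndsInterval]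
  obtain ⟨Q', c, q, hc, hQ'q, rfl⟩ := exists_eq_append_replicate hQ hQne
  have hQ' : Q'.Pairwise (· ≥ ·) := hQ.sublist (List.sublist_append_left _ _)
  rw [ih _ (by simp; omega) hQ rfl, exists_rowEndsInterval_append_replicate_iff hQ' hQ'q hc,
    rowEndsInterval_append_replicate_iff hQ' hQ'q hc,
    forall_min_append_replicate_iff hQ'q hc]
  simp only [List.length_append, List.length_replicate]
  constructor
  · rintro ⟨h, hq⟩
    have e : q + Q'.length + c = p + (Q'.length + c) + m + c := by omega
    exact ⟨by omega, e ▸ h⟩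
  · rintro ⟨hq, h⟩
    have e : p + (Q'.length + c) + m + c = q + Q'.length + c := by omega
    exact ⟨e ▸ h, by omega⟩

/-- `ofBlocks a [m₁, m₂, …]` lists the parts from the bottom up: the smallest part
`a - (m₂ + m₃ + ⋯)` occurs `m₁` times, the next one `m₂` times, and so on. When
`m₂ + m₃ + ⋯ < a`, the row ends of the result fill `[a, a + ∑ mᵢ)`. -/
def ofBlocks (a : ℕ) : List ℕ → List ℕ
  | [] => []
  | m :: L => ofBlocks (a + m) L ++ List.replicate m (a - L.sum)

section OfBlocks

variable {L : List ℕ} {a : ℕ}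

theorem ofBlocks_cons (m : ℕ) (L : List ℕ) :
    ofBlocks a (m :: L) = ofBlocks (a + m) L ++ List.replicate m (a - L.sum) := rfl

theorem length_ofBlocks (a : ℕ) (L : List ℕ) : (ofBlocks a L).length = L.sum := by
  induction L generalizing a with
  | nil => rfl
  | cons m L ih => simp [ofBlocks_cons, ih, add_comm]

theorem sum_ofBlocks (ha : L.tail.sum < a) : (ofBlocks a L).sum = L.sum * a := by
  induction L generalizing a with
  | nil => simp [ofBlocks]
  | cons m L ih =>
    rw [List.tail_cons] at ha
    rw [ofBlocks_cons, List.sum_append, ih ((sum_tail_le L).trans_lt (by omega)),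
      List.sum_replicate, smul_eq_mul, List.sum_cons]
    obtain ⟨t, rfl⟩ := Nat.exists_eq_add_of_lt ha
    rw [show L.sum + t + 1 - L.sum = t + 1 by omega]
    ring

theorem pos_of_mem_ofBlocks (ha : L.tail.sum < a) : ∀ x ∈ ofBlocks a L, 0 < x := by
  induction L generalizing a with
  | nil => simp [ofBlocks]
  | cons m L ih =>
    rw [List.tail_cons] at ha
    intro x hx
    rcases List.mem_append.1 (ofBlocks_cons (a := a) m L ▸ hx) with hx | hx
    · exact ih ((sum_tail_le L).trans_lt (by omega)) x hx
    · rw [List.eq_of_mem_replicate hx]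
      omega

theorem lt_add_sum_of_mem_ofBlocks (hL : ∀ m ∈ L, 0 < m) (ha : L.tail.sum < a) :
    ∀ x ∈ ofBlocks a L, a < x + L.sum := by
  induction L generalizing a with
  | nil => simp [ofBlocks]
  | cons m L ih =>
    rw [List.tail_cons] at ha
    have hm := hL m List.mem_cons_self
    intro x hx
    rw [List.sum_cons]
    rcases List.mem_append.1 (ofBlocks_cons (a := a) m L ▸ hx) with hx | hx
    · have := ih (fun m hm => hL m (List.mem_cons_of_mem _ hm))
        ((sum_tail_le L).trans_lt (by omega)) x hx
      omega
    · rw [List.eq_of_mem_replicate hx]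
      omega

theorem pairwise_ofBlocks (hL : ∀ m ∈ L, 0 < m) (ha : L.tail.sum < a) :
    (ofBlocks a L).Pairwise (· ≥ ·) := by
  induction L generalizing a with
  | nil => exact List.Pairwise.nil
  | cons m L ih =>
    rw [List.tail_cons] at ha
    have hL' : ∀ m ∈ L, 0 < m := fun m hm => hL m (List.mem_cons_of_mem _ hm)
    have ha' : L.tail.sum < a + m := (sum_tail_le L).trans_lt (by omega)
    rw [ofBlocks_cons, List.pairwise_append]
    refine ⟨ih hL' ha', List.pairwise_replicate.2 (.inr le_rfl), fun x hx y hy => ?_⟩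
    have := lt_add_sum_of_mem_ofBlocks hL' ha' x hx
    rw [List.eq_of_mem_replicate hy]
    omega

theorem rowEndsInterval_ofBlocks (hL : ∀ m ∈ L, 0 < m) (ha : L.tail.sum < a) :
    RowEndsInterval (ofBlocks a L) a := by
  induction L generalizing a with
  | nil => simp [ofBlocks, RowEndsInterval]
  | cons m L ih =>
    rw [List.tail_cons] at ha
    have hL' : ∀ m ∈ L, 0 < m := fun m hm => hL m (List.mem_cons_of_mem _ hm)
    rw [ofBlocks_cons]
    exact (ih hL' ((sum_tail_le L).trans_lt (by omega))).append_replicate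
      (hL m List.mem_cons_self) (by rw [length_ofBlocks]; omega)

theorem ofBlocks_injective {L₁ L₂ : List ℕ} (h₁ : ∀ m ∈ L₁, 0 < m) (h₂ : ∀ m ∈ L₂, 0 < m)
    (ha₁ : L₁.tail.sum < a) (ha₂ : L₂.tail.sum < a) (h : ofBlocks a L₁ = ofBlocks a L₂) :
    L₁ = L₂ := by
  induction L₁ generalizing L₂ a with
  | nil =>
    have := congrArg List.length h
    rw [length_ofBlocks, length_ofBlocks, List.sum_nil, eq_comm, List.sum_eq_zero_iff] at this
    exact (List.eq_nil_iff_forall_not_mem.2 fun m hm => (h₂ m hm).ne' (this m hm)).symm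
  | cons m₁ T₁ ih =>
    obtain _ | ⟨m₂, T₂⟩ := L₂
    · have := congrArg List.length h
      rw [length_ofBlocks, length_ofBlocks, List.sum_nil, List.sum_cons] at this
      have := h₁ m₁ List.mem_cons_self
      omega
    · have hm₁ := h₁ m₁ List.mem_cons_self
      have hm₂ := h₂ m₂ List.mem_cons_self
      rw [List.tail_cons] at ha₁ ha₂
      have hlen := congrArg List.length h
      have hlast := congrArg List.getLast? h
      rw [length_ofBlocks, length_ofBlocks, List.sum_cons, List.sum_cons] at hlen
      simp only [ofBlocks_cons, List.getLast?_append, List.getLast?_replicate, hm₁.ne',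
        hm₂.ne', if_false, Option.some_or, Option.some.injEq] at hlast
      obtain rfl : m₁ = m₂ := by omega
      rw [ofBlocks_cons, ofBlocks_cons] at h
      obtain ⟨hT, -⟩ := List.append_inj' h (by simp)
      rw [ih (fun m hm => h₁ m (List.mem_cons_of_mem _ hm))
        (fun m hm => h₂ m (List.mem_cons_of_mem _ hm)) ((sum_tail_le T₁).trans_lt (by omega))
        ((sum_tail_le T₂).trans_lt (by omega)) hT]

end OfBlocks

theorem RowEndsInterval.exists_eq_ofBlocks {P : List ℕ} {a : ℕ} (hP : P.Pairwise (· ≥ ·))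
    (hpos : ∀ x ∈ P, 0 < x) (ha : 0 < a) (h : RowEndsInterval P a) :
    ∃ L : List ℕ, (∀ m ∈ L, 0 < m) ∧ L.sum = P.length ∧ L.tail.sum < a ∧ P = ofBlocks a L := by
  induction hn : P.length using Nat.strong_induction_on generalizing P a with
  | _ n ih =>
  subst hn
  rcases eq_or_ne P [] with rfl | hne
  · exact ⟨[], by simp, rfl, ha, rfl⟩
  obtain ⟨Q, m, p, hm, hQp, rfl⟩ := exists_eq_append_replicate hP hne
  have hQ : Q.Pairwise (· ≥ ·) := hP.sublist (List.sublist_append_left _ _)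
  have hp : 0 < p := hpos p (by simp [hm.ne'])
  obtain ⟨hpa, hQa⟩ := (rowEndsInterval_append_replicate_iff hQ hQp hm).1 h
  obtain ⟨L, hL, hLsum, -, rfl⟩ := ih _ (by simp; omega) hQ
    (fun x hx => hpos x (List.mem_append_left _ hx)) (by omega) hQa rfl
  refine ⟨m :: L, ?_, by simp [hLsum, add_comm], by simp; omega, ?_⟩
  · simpa [hm] using hL
  · rw [ofBlocks_cons, hLsum]
    congr 2
    omega

section Diagonals

variable {P : List ℕ} {a : ℕ}

theorem diagLen_add_card_rowEnd_le (hpos : ∀ x ∈ P, 0 < x) (i : ℕ) :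
    diagLen P i + ((range P.length).filter (rowEnd P · ≤ i)).card = min (i + 1) P.length := by
  have hrow : ∀ r, 0 < P.getD r 0 ↔ r < P.length := getD_pos_iff hpos
  have hdiag : (range (i + 1)).filter (fun r => i - r < P.getD r 0) =
      ((range P.length).filter (· ≤ i)).filter (i < rowEnd P ·) := by
    ext r
    simp only [mem_filter, mem_range]
    unfold rowEnd
    have := hrow r
    omega
  have hle : (range P.length).filter (rowEnd P · ≤ i) =
      ((range P.length).filter (· ≤ i)).filter (¬ i < rowEnd P ·) := by
    ext r
    simp only [mem_filter, mem_range]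
    unfold rowEnd
    have := hrow r
    omega
  have hrows : (range P.length).filter (· ≤ i) = range (min (i + 1) P.length) := by
    ext r
    simp only [mem_filter, mem_range]
    omega
  rw [diagLen, hdiag, hle, card_filter_add_card_filter_not, hrows, card_range]

theorem RowEndsInterval.card_rowEnd_le (h : RowEndsInterval P a) (i : ℕ) :
    ((range P.length).filter (rowEnd P · ≤ i)).card = min (a + P.length) (i + 1) - a := by
  rw [← card_image_of_injOn (h.injOn.mono (filter_subset _ _)), ← filter_image (p := (· ≤ i)), h]
  have : (Ico a (a + P.length)).filter (· ≤ i) = Ico a (min (a + P.length) (i + 1)) := by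
    ext x
    simp only [mem_filter, mem_Ico]
    omega
  rw [this, Nat.card_Ico]

theorem RowEndsInterval.diagLen_add (hpos : ∀ x ∈ P, 0 < x) (h : RowEndsInterval P a) (i : ℕ) :
    diagLen P i + (min (a + P.length) (i + 1) - a) = min (i + 1) P.length := by
  rw [← h.card_rowEnd_le]
  exact diagLen_add_card_rowEnd_le hpos i

theorem Tdk_eq_min (d k i : ℕ) : Tdk d k i = min (min (i + 1) d) (2 * d + k - 2 - i) := by
  unfold Tdk
  split <;> omega

/-- Evaluating the diagonal-length identity at `i = d - 1, n - 1, 2d + k - 3, 2d + k - 2`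
pins down the number of parts `n` and the interval start `a`. -/
theorem RowEndsInterval.length_start_of_diagLen_eq_Tdk {d k : ℕ} (hd : 1 ≤ d) (hk : 1 ≤ k)
    (hpos : ∀ x ∈ P, 0 < x) (h : RowEndsInterval P a) (hdiag : ∀ i, diagLen P i = Tdk d k i) :
    (P.length = d ∧ a = d + k - 1) ∨ (P.length = d + k - 1 ∧ a = d) := by
  have key : ∀ i, min (min (i + 1) d) (2 * d + k - 2 - i) + (min (a + P.length) (i + 1) - a) =
      min (i + 1) P.length := fun i => by rw [← Tdk_eq_min, ← hdiag i, h.diagLen_add hpos i]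
  have h₁ := key (d - 1)
  have h₂ := key (P.length - 1)
  have h₃ := key (2 * d + k - 3)
  have h₄ := key (2 * d + k - 2)
  clear key hdiag h hpos
  have hda : d ≤ a ∧ d ≤ P.length := by clear h₂ h₃ h₄; omega
  rcases le_or_gt P.length a with hna | hna
  · have hn : P.length = d := by clear h₁ h₃ h₄; omega
    exact .inl ⟨hn, by clear h₁ h₂; omega⟩
  · have ha : a = d := by clear h₁ h₃ h₄; omega
    exact .inr ⟨by clear h₁ h₂; omega, ha⟩

theorem RowEndsInterval.diagLen_eq_Tdk {d k : ℕ} (hpos : ∀ x ∈ P, 0 < x)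
    (h : RowEndsInterval P a)
    (hna : (P.length = d ∧ a = d + k - 1) ∨ (P.length = d + k - 1 ∧ a = d)) (i : ℕ) :
    diagLen P i = Tdk d k i := by
  have := h.diagLen_add hpos i
  rw [Tdk_eq_min]
  omega

end Diagonals

section Counting

variable {d k : ℕ}

theorem mem_ciSet_iff {n a : ℕ} (hd : 1 ≤ d) (hk : 1 ≤ k)
    (hna : (n = d ∧ a = d + k - 1) ∨ (n = d + k - 1 ∧ a = d)) {P : List ℕ} :
    P ∈ ciSet d k n ↔
      ∃ L : List ℕ, (∀ m ∈ L, 0 < m) ∧ L.sum = n ∧ L.tail.sum < a ∧ P = ofBlocks a L := by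
  constructor
  · rintro ⟨⟨hP, hpos⟩, -, hdiag, hCI, rfl⟩
    obtain ⟨a', h⟩ := (ciCriterion_iff_exists_rowEndsInterval hP).1 hCI
    obtain rfl : a' = a := by
      have := h.length_start_of_diagLen_eq_Tdk hd hk hpos hdiag
      omega
    exact h.exists_eq_ofBlocks hP hpos (by omega)
  · rintro ⟨L, hL, rfl, ha, rfl⟩
    have hsorted := pairwise_ofBlocks hL ha
    have hpos := pos_of_mem_ofBlocks ha
    have h := rowEndsInterval_ofBlocks hL ha
    refine ⟨⟨hsorted, hpos⟩, ?_, h.diagLen_eq_Tdk hpos (by rw [length_ofBlocks]; exact hna),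
      (ciCriterion_iff_exists_rowEndsInterval hsorted).2 ⟨a, h⟩, length_ofBlocks a L⟩
    rw [sum_ofBlocks ha]
    rcases hna with ⟨hn, rfl⟩ | ⟨hn, rfl⟩
    · rw [hn]
    · rw [hn, mul_comm]

theorem ncard_ciSet_eq_ncard_blocks {n a : ℕ} (hd : 1 ≤ d) (hk : 1 ≤ k)
    (hna : (n = d ∧ a = d + k - 1) ∨ (n = d + k - 1 ∧ a = d)) :
    (ciSet d k n).ncard = {L : List ℕ | (∀ m ∈ L, 0 < m) ∧ L.sum = n ∧ L.tail.sum < a}.ncard := by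
  have : ciSet d k n = ofBlocks a '' {L | (∀ m ∈ L, 0 < m) ∧ L.sum = n ∧ L.tail.sum < a} := by
    ext P
    rw [mem_ciSet_iff hd hk hna]
    simp only [Set.mem_image, Set.mem_ofPred_eq, and_assoc, eq_comm (a := P)]
  rw [this]
  exact Set.InjOn.ncard_image fun L₁ h₁ L₂ h₂ h => ofBlocks_injective h₁.1 h₂.1 h₁.2.2 h₂.2.2 h

theorem ncard_compositions (d : ℕ) :
    {L : List ℕ | (∀ m ∈ L, 0 < m) ∧ L.sum = d}.ncard = 2 ^ (d - 1) := by
  have : {L : List ℕ | (∀ m ∈ L, 0 < m) ∧ L.sum = d} = Set.range (Composition.blocks (n := d)) := by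
    ext L
    refine ⟨fun h => ⟨⟨L, h.1 _, h.2⟩, rfl⟩, ?_⟩
    rintro ⟨c, rfl⟩
    exact ⟨fun _ => c.blocks_pos, c.blocks_sum⟩
  rw [this, Set.ncard_range_of_injective fun _ _ => Composition.ext, Nat.card_eq_fintype_card,
    composition_card]

theorem ncard_ciSet_d (hd : 1 ≤ d) (hk : 1 ≤ k) : (ciSet d k d).ncard = 2 ^ (d - 1) := by
  rw [ncard_ciSet_eq_ncard_blocks hd hk (.inl ⟨rfl, rfl⟩), ← ncard_compositions d]
  congr 1
  ext L
  refine ⟨fun h => ⟨h.1, h.2.1⟩, fun ⟨hL, hsum⟩ => ⟨hL, hsum, ?_⟩⟩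
  have := sum_tail_lt hL (by rintro rfl; simp at hsum; omega)
  omega

theorem ncard_ciSet_d_add_k_sub_one (hd : 1 ≤ d) (hk : 1 ≤ k) :
    (ciSet d k (d + k - 1)).ncard = 2 ^ (d - 1) := by
  rw [ncard_ciSet_eq_ncard_blocks hd hk (.inr ⟨rfl, rfl⟩), ← ncard_compositions d,
    ← Set.ncard_image_of_injective {L : List ℕ | (∀ m ∈ L, 0 < m) ∧ L.sum = d}
      (modifyHead_injective (add_left_injective (k - 1)))]
  congr 1
  ext L
  simp only [Set.mem_ofPred_eq, Set.mem_image]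
  constructor
  · rintro ⟨hL, hsum, htail⟩
    obtain _ | ⟨m, T⟩ := L
    · simp at hsum
      omega
    simp only [List.mem_cons, forall_eq_or_imp, List.sum_cons, List.tail_cons] at hL hsum htail
    refine ⟨(m - (k - 1)) :: T, ⟨?_, ?_⟩, ?_⟩
    · simp only [List.mem_cons, forall_eq_or_imp]
      exact ⟨by omega, hL.2⟩
    · simp only [List.sum_cons]
      omega
    · simp only [List.modifyHead_cons]
      congr 1
      omega
  · rintro ⟨_ | ⟨m, T⟩, ⟨hL, hsum⟩, rfl⟩
    · simp at hsum
      omega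
    simp only [List.mem_cons, forall_eq_or_imp, List.sum_cons] at hL hsum
    simp only [List.modifyHead_cons, List.mem_cons, forall_eq_or_imp, List.sum_cons,
      List.tail_cons]
    exact ⟨⟨by omega, hL.2⟩, by omega, by omega⟩

end Counting

end CIPartition

theorem stmt_15_general (d k : ℕ) (hd : 2 ≤ d) :
    (2 ≤ k →
      (ciSet d k d).ncard = 2 ^ (d - 1) ∧
      (ciSet d k (d + k - 1)).ncard = 2 ^ (d - 1)) ∧
    (k = 1 →
      (∀ P : List ℕ, IsPartitionList P → P.sum = d * d →
        (∀ i : ℕ, diagLen P i = Tdk d 1 i) → CICriterion P → P.length = d) ∧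
      (ciSet d 1 d).ncard = 2 ^ (d - 1)) := by
  refine ⟨fun hk => ⟨CIPartition.ncard_ciSet_d (by omega) (by omega),
    CIPartition.ncard_ciSet_d_add_k_sub_one (by omega) (by omega)⟩, fun hk => ?_⟩
  subst hk
  refine ⟨fun P ⟨hP, hpos⟩ _ hdiag hCI => ?_, CIPartition.ncard_ciSet_d (by omega) le_rfl⟩
  obtain ⟨a, h⟩ := (CIPartition.ciCriterion_iff_exists_rowEndsInterval hP).1 hCI
  have := h.length_start_of_diagLen_eq_Tdk (by omega) le_rfl hpos hdiag
  omega

/-- counts of CIJT partitions by number of parts. If `k ≥ 2`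
there are `2^(d-1)` CIJT partitions with exactly `d` parts and `2^(d-1)` with
exactly `d+k-1` parts. If `k = 1` every CIJT partition has exactly `d` parts
and there are `2^(d-1)` of them. -/
theorem stmt_15 (d k : ℕ) (hd : 2 ≤ d) (hk : 1 ≤ k) :
    (2 ≤ k →
      (ciSet d k d).ncard = 2 ^ (d - 1) ∧
      (ciSet d k (d + k - 1)).ncard = 2 ^ (d - 1)) ∧
    (k = 1 →
      (∀ P : List ℕ, IsPartitionList P → P.sum = d * d →
        (∀ i : ℕ, diagLen P i = Tdk d 1 i) → CICriterion P → P.length = d) ∧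
      (ciSet d 1 d).ncard = 2 ^ (d - 1)) :=
  stmt_15_general d k hd
end

section
/- Let d ≥ 2 and k ≥ 1 be integers. For every integer 0 ≤ a ≤ d−2, the number of partitions of d(d+k−1) having diagonal lengths T(d,k), satisfying the CI criterion, having exactly d parts, and whose smallest part equals a+k, is 2^{d−2−a}. Moreover there is exactly one such partition whose smallest part equals d+k−1, namely the rectangle consisting of d parts each equal to d+k−1. -/
open MvPolynomial

/-!
Write `diagEnd P r = p_(r+1) + r` for the diagonal just beyond row `r`. For a partition
satisfying the CI criterion these numbers fill an interval of length equal to the number of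
parts: peeling off the smallest block `b^m` of an `n`-part partition contributes
`[n - m + b, n + b)`, and the criterion for the adjacent pair says exactly that the interval of
the remaining rows starts at `n + b`. With `d` parts, the diagonal lengths are `T(d,k)` iff this
interval is `[d + k - 1, 2d + k - 1)`, i.e. iff `b = m + k - 1`. Removing the bottom block
`b^m` then leaves a partition of the same kind for `(d - m, k + 2m)`, so the partitions with
smallest part `a + k` are counted by those for `(d - a - 1, k + 2a + 2)`, and induction on `d`
gives `2^(d-1)` partitions for every `(d, k)`, the rectangle being the case `m = d`.
-/

open Finset

lemma List.sum_eq_sum_range_getD (P : List ℕ) :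
    P.sum = ∑ r ∈ Finset.range P.length, P.getD r 0 := by
  induction P with
  | nil => simp
  | cons a t ih => simp [Finset.sum_range_succ', ih, add_comm]

lemma minPart_eq_getLast {P : List ℕ} (h : P ≠ []) : minPart P = P.getLast h := by
  simp [minPart, List.getLast?_eq_some_getLast h]

lemma minPart_mem {P : List ℕ} (h : P ≠ []) : minPart P ∈ P :=
  minPart_eq_getLast h ▸ List.getLast_mem h

lemma minPart_le {P : List ℕ} (hP : P.Pairwise (· ≥ ·)) {x : ℕ} (hx : x ∈ P) :
    minPart P ≤ x :=
  minPart_eq_getLast (List.ne_nil_of_mem hx) ▸ hP.rel_getLast hx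

lemma minPart_append_replicate (F : List ℕ) {m : ℕ} (hm : m ≠ 0) (b : ℕ) :
    minPart (F ++ List.replicate m b) = b := by
  have hrep : List.replicate m b ≠ [] := by simpa using hm
  rw [minPart_eq_getLast (List.append_ne_nil_of_right_ne_nil F hrep),
    List.getLast_append_of_ne_nil _ hrep, List.getLast_replicate]

lemma count_append_replicate_self {F : List ℕ} {b : ℕ} (hb : b ∉ F) (m : ℕ) :
    (F ++ List.replicate m b).count b = m := by
  simp [List.count_eq_zero.2 hb]

lemma count_append_replicate_of_ne (F : List ℕ) {x b : ℕ} (h : x ≠ b) (m : ℕ) :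
    (F ++ List.replicate m b).count x = F.count x := by
  simp [List.count_replicate, Ne.symm h]

lemma exists_eq_append_replicate {P : List ℕ} (hP : P.Pairwise (· ≥ ·)) (hne : P ≠ []) :
    ∃ F m b, m ≠ 0 ∧ (∀ x ∈ F, b < x) ∧ P = F ++ List.replicate m b := by
  induction P with
  | nil => exact absurd rfl hne
  | cons a t ih =>
    rcases eq_or_ne t [] with rfl | ht
    · exact ⟨[], 1, a, one_ne_zero, by simp, rfl⟩
    obtain ⟨F, m, b, hm, hFb, rfl⟩ := ih hP.of_cons ht
    have hba : b ≤ a := List.rel_of_pairwise_cons hP (by simp [hm])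
    rcases hba.eq_or_lt with rfl | hba
    · obtain rfl : F = [] := List.eq_nil_iff_forall_not_mem.2 fun x hx =>
        (hFb x hx).not_ge (List.rel_of_pairwise_cons hP (List.mem_append_left _ hx))
      exact ⟨[], m + 1, b, by omega, by simp, rfl⟩
    · exact ⟨a :: F, m, b, hm, by simpa [hba] using hFb, rfl⟩

lemma IsPartitionList.sublist {P Q : List ℕ} (hP : IsPartitionList P) (h : Q.Sublist P) :
    IsPartitionList Q :=
  ⟨hP.1.sublist h, fun p hp => hP.2 p (h.subset hp)⟩

lemma IsPartitionList.append_replicate {F : List ℕ} {b : ℕ} (hF : IsPartitionList F)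
    (hb : 0 < b) (hFb : ∀ x ∈ F, b < x) (m : ℕ) :
    IsPartitionList (F ++ List.replicate m b) := by
  refine ⟨List.pairwise_append.2 ⟨hF.1, List.pairwise_replicate.2 (Or.inr le_rfl), ?_⟩, ?_⟩
  · intro x hx y hy
    rw [List.eq_of_mem_replicate hy]
    exact (hFb x hx).le
  · intro p hp
    rcases List.mem_append.1 hp with hp | hp
    · exact hF.2 p hp
    · rwa [List.eq_of_mem_replicate hp]

/-- Appending a block `b^m` below `F` adds exactly one adjacent pair of part sizes,
`(minPart F, b)`. -/
lemma ciCriterion_append_replicate_iff {F : List ℕ} {m b : ℕ} (hF : F.Pairwise (· ≥ ·))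
    (hFne : F ≠ []) (hFb : ∀ x ∈ F, b < x) (hm : m ≠ 0) :
    CICriterion (F ++ List.replicate m b) ↔
      CICriterion F ∧ minPart F = F.count (minPart F) + m + b := by
  have hbF : b ∉ F := fun h => (hFb b h).false
  have hmemb : b ∈ F ++ List.replicate m b := by simp [hm]
  have hcount : ∀ x ∈ F, (F ++ List.replicate m b).count x = F.count x := fun x hx =>
    count_append_replicate_of_ne F (hFb x hx).ne' m
  have hcountb := count_append_replicate_self hbF m
  have hmin := minPart_mem hFne
  constructor
  · intro hci
    refine ⟨fun x y hx hy hyx hadj => ?_, ?_⟩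
    · rw [← hcount x hx, ← hcount y hy]
      refine hci x y (List.mem_append_left _ hx) (List.mem_append_left _ hy) hyx fun z hz => ?_
      rcases List.mem_append.1 hz with hz | hz
      · exact hadj z hz
      · exact Or.inl ((List.eq_of_mem_replicate hz).le.trans (hFb y hy).le)
    · have hlink := hci _ b (List.mem_append_left _ hmin) hmemb (hFb _ hmin) fun z hz => by
        rcases List.mem_append.1 hz with hz | hz
        · exact Or.inr (minPart_le hF hz)
        · exact Or.inl (List.eq_of_mem_replicate hz).le
      rwa [hcount _ hmin, hcountb] at hlink
  · rintro ⟨hci, hlink⟩ x y hx hy hyx hadj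
    have hxF : x ∈ F := by
      refine (List.mem_append.1 hx).resolve_right fun hxb => ?_
      rcases List.mem_append.1 hy with hy | hy
      · exact (hFb y hy).not_gt (List.eq_of_mem_replicate hxb ▸ hyx)
      · exact hyx.ne (List.eq_of_mem_replicate hy ▸ (List.eq_of_mem_replicate hxb).symm)
    rcases List.mem_append.1 hy with hyF | hyb
    · rw [hcount x hxF, hcount y hyF]
      exact hci x y hxF hyF hyx fun z hz => hadj z (List.mem_append_left _ hz)
    · obtain rfl := List.eq_of_mem_replicate hyb
      have hx : x = minPart F :=
        le_antisymm (((hadj _ (List.mem_append_left _ hmin)).resolve_left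
          (hFb _ hmin).not_ge)) (minPart_le hF hxF)
      rwa [hcount x hxF, hcountb, hx]

/-- Row `r` of `P` meets the diagonal `i` exactly when `r ≤ i < diagEnd P r`. -/
def diagEnd (P : List ℕ) (r : ℕ) : ℕ := P.getD r 0 + r

lemma diagEnd_of_length_le {P : List ℕ} {r : ℕ} (h : P.length ≤ r) : diagEnd P r = r := by
  rw [diagEnd, List.getD_eq_default _ _ h, zero_add]

lemma diagLen_eq_card_filter (P : List ℕ) (i : ℕ) :
    diagLen P i = #{r ∈ range (i + 1) | i < diagEnd P r} := by
  unfold diagLen diagEnd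
  congr 1
  exact filter_congr fun r hr => by rw [mem_range] at hr; omega

lemma image_diagEnd_append_replicate (F : List ℕ) (m b : ℕ) :
    (range (F.length + m)).image (diagEnd (F ++ List.replicate m b)) =
      (range F.length).image (diagEnd F) ∪ Ico (F.length + b) (F.length + m + b) := by
  rw [range_eq_Ico, ← Ico_union_Ico_eq_Ico (Nat.zero_le F.length) (Nat.le_add_right _ m),
    image_union, ← range_eq_Ico]
  congr 1
  · refine image_congr fun r hr => ?_
    rw [diagEnd, diagEnd, List.getD_append _ _ _ _ (mem_range.1 hr)]
  · rw [← image_add_right_Ico]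
    refine image_congr fun r hr => ?_
    rw [mem_coe, mem_Ico] at hr
    rw [diagEnd, List.getD_append_right _ _ _ _ hr.1,
      List.getD_replicate _ (by omega : r - F.length < m), add_comm]

theorem image_diagEnd_eq_Ico {P : List ℕ} (hP : IsPartitionList P) (hci : CICriterion P)
    (hne : P ≠ []) :
    (range P.length).image (diagEnd P) =
      Ico (minPart P + P.length - P.count (minPart P))
        (minPart P + 2 * P.length - P.count (minPart P)) := by
  induction h : P.length using Nat.strong_induction_on generalizing P with
  | _ n ih =>
  subst h
  obtain ⟨F, m, b, hm, hFb, rfl⟩ := exists_eq_append_replicate hP.1 hne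
  have hbF : b ∉ F := fun h => (hFb b h).false
  rw [minPart_append_replicate F hm, count_append_replicate_self hbF, List.length_append,
    List.length_replicate, image_diagEnd_append_replicate]
  rcases eq_or_ne F [] with rfl | hFne
  · simp only [List.length_nil, range_zero, image_empty, empty_union, zero_add]
    congr 1 <;> omega
  have hF := hP.sublist (List.sublist_append_left F _)
  obtain ⟨hciF, hlink⟩ := (ciCriterion_append_replicate_iff hF.1 hFne hFb hm).1 hci
  have hlow : minPart F + F.length - F.count (minPart F) = F.length + m + b := by omega
  have hhigh : minPart F + 2 * F.length - F.count (minPart F) = 2 * F.length + m + b := by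
    omega
  rw [ih F.length (by simp; omega) hF hciF hFne rfl, hlow, hhigh, union_comm,
    Ico_union_Ico_eq_Ico (by omega) (by omega)]
  congr 1 <;> omega

section DiagonalLengths

variable {P : List ℕ} {d k : ℕ}

lemma diagEnd_mem_Ico_of_diagLen_eq_Tdk (hd : 1 ≤ d) (hk : 1 ≤ k) (hlen : P.length = d)
    (hdiag : ∀ i, diagLen P i = Tdk d k i) {r : ℕ} (hr : r < d) :
    diagEnd P r ∈ Ico (d + k - 1) (2 * d + k - 1) := by
  have hfull : #{r ∈ range (d + k - 2 + 1) | d + k - 2 < diagEnd P r} = d := by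
    rw [← diagLen_eq_card_filter, hdiag, Tdk, if_pos (by omega)]
    omega
  have hempty : #{r ∈ range (2 * d + k - 2 + 1) | 2 * d + k - 2 < diagEnd P r} = 0 := by
    rw [← diagLen_eq_card_filter, hdiag, Tdk, if_neg (by omega)]
  have hsub : {r ∈ range (d + k - 2 + 1) | d + k - 2 < diagEnd P r} ⊆ range d := by
    intro r hr
    rw [mem_filter, mem_range] at hr
    by_contra hrd
    rw [diagEnd_of_length_le (by rw [mem_range] at hrd; omega)] at hr
    omega
  have hlow := (mem_filter.1 <|
    eq_of_subset_of_card_le hsub (by rw [hfull, card_range]) ▸ mem_range.2 hr).2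
  have hhigh := filter_eq_empty_iff.1 (card_eq_zero.1 hempty) (mem_range.2 (by omega : r < _))
  rw [mem_Ico]
  omega

lemma diagLen_eq_Tdk_of_image_diagEnd (hk : 1 ≤ k) (hlen : P.length = d)
    (himg : (range d).image (diagEnd P) = Ico (d + k - 1) (2 * d + k - 1)) (i : ℕ) :
    diagLen P i = Tdk d k i := by
  have hmem : ∀ r < d, diagEnd P r ∈ Ico (d + k - 1) (2 * d + k - 1) := fun r hr =>
    himg ▸ mem_image_of_mem _ (mem_range.2 hr)
  rw [diagLen_eq_card_filter]
  rcases lt_or_ge i d with hi | hi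
  · rw [filter_true_of_mem fun r hr => ?_, card_range]
    · unfold Tdk; split <;> omega
    · have := mem_Ico.1 (hmem r (by rw [mem_range] at hr; omega)); omega
  · have hinj : Set.InjOn (diagEnd P) (range d) :=
      injOn_of_card_image_eq (by rw [himg, Nat.card_Ico, card_range]; omega)
    have hrows : {r ∈ range (i + 1) | i < diagEnd P r} = {r ∈ range d | i < diagEnd P r} := by
      ext r
      simp only [mem_filter, mem_range]
      constructor
      · rintro ⟨hr, hir⟩
        refine ⟨by_contra fun hrd => ?_, hir⟩
        rw [diagEnd_of_length_le (by omega)] at hir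
        omega
      · rintro ⟨hr, hir⟩
        exact ⟨by omega, hir⟩
    have hvals : {v ∈ Ico (d + k - 1) (2 * d + k - 1) | i < v} =
        Ico (max (d + k - 1) (i + 1)) (2 * d + k - 1) := by
      ext v; simp only [mem_filter, mem_Ico]; omega
    rw [hrows, ← card_image_of_injOn (hinj.mono (coe_subset.2 (filter_subset _ _))),
      ← filter_image, himg, hvals, Nat.card_Ico]
    unfold Tdk; split <;> omega

lemma sum_eq_of_image_diagEnd {a : ℕ} (hlen : P.length = d)
    (himg : (range d).image (diagEnd P) = Ico a (a + d)) : P.sum = d * a := by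
  have hinj : Set.InjOn (diagEnd P) (range d) :=
    injOn_of_card_image_eq (by rw [himg, Nat.card_Ico, card_range]; omega)
  have hsum : ∑ r ∈ range d, (P.getD r 0 + r) = ∑ r ∈ range d, (a + r) :=
    calc _ = ∑ v ∈ (range d).image (diagEnd P), v := (sum_image hinj).symm
      _ = _ := by rw [himg, sum_Ico_eq_sum_range, Nat.add_sub_cancel_left]
  rw [sum_add_distrib, sum_add_distrib, sum_const, card_range, smul_eq_mul] at hsum
  rw [List.sum_eq_sum_range_getD, hlen]
  omega

end DiagonalLengths

/-- The last condition is the CI criterion continued below the smallest block `b^m` by a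
virtual block of `k - 1` parts equal to `0`: `b = m + (k - 1) + 0`. -/
def ciFamily (d k : ℕ) : Set (List ℕ) :=
  {P | IsPartitionList P ∧ P.length = d ∧ CICriterion P ∧
    minPart P + 1 = P.count (minPart P) + k}

theorem ciSet_eq_ciFamily {d k : ℕ} (hd : 1 ≤ d) (hk : 1 ≤ k) : ciSet d k d = ciFamily d k := by
  ext P
  have hne : P.length = d → P ≠ [] := by rintro hlen rfl; simp at hlen; omega
  have hcount_le : P.length = d → P.count (minPart P) ≤ d := fun hlen =>
    hlen ▸ List.count_le_length
  constructor
  · rintro ⟨hP, -, hdiag, hci, hlen⟩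
    have hsub : (range d).image (diagEnd P) ⊆ Ico (d + k - 1) (2 * d + k - 1) := by
      intro v hv
      obtain ⟨r, hr, rfl⟩ := mem_image.1 hv
      exact diagEnd_mem_Ico_of_diagLen_eq_Tdk hd hk hlen hdiag (mem_range.1 hr)
    have hcount := hcount_le hlen
    rw [← hlen, image_diagEnd_eq_Ico hP hci (hne hlen), hlen,
      Ico_subset_Ico_iff (by omega)] at hsub
    exact ⟨hP, hlen, hci, by omega⟩
  · rintro ⟨hP, hlen, hci, hmin⟩
    have himg := image_diagEnd_eq_Ico hP hci (hne hlen)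
    have hcount := hcount_le hlen
    rw [hlen, show minPart P + d - P.count (minPart P) = d + k - 1 by omega,
      show minPart P + 2 * d - P.count (minPart P) = 2 * d + k - 1 by omega] at himg
    refine ⟨hP, sum_eq_of_image_diagEnd hlen (himg.trans ?_),
      diagLen_eq_Tdk_of_image_diagEnd hk hlen himg, hci, hlen⟩
    congr 1; omega

lemma ciFamily_minPart_eq_image {d a k : ℕ} (hd : 1 ≤ d) (hk : 1 ≤ k) :
    {P ∈ ciFamily (d + (a + 1)) k | minPart P = a + k} =
      (· ++ List.replicate (a + 1) (a + k)) '' ciFamily d (k + 2 * (a + 1)) := by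
  ext P
  constructor
  · rintro ⟨⟨hP, hlen, hci, hcount⟩, hmin⟩
    have hne : P ≠ [] := by rintro rfl; simp at hlen
    obtain ⟨F, m, b, hm, hFb, rfl⟩ := exists_eq_append_replicate hP.1 hne
    have hbF : b ∉ F := fun h => (hFb b h).false
    rw [minPart_append_replicate F hm] at hmin hcount
    subst hmin
    rw [count_append_replicate_self hbF] at hcount
    obtain rfl : m = a + 1 := by omega
    have hFlen : F.length = d := by simpa using hlen
    have hFne : F ≠ [] := by rintro rfl; simp at hFlen; omega
    have hF := hP.sublist (List.sublist_append_left F _)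
    obtain ⟨hciF, hlink⟩ := (ciCriterion_append_replicate_iff hF.1 hFne hFb hm).1 hci
    exact ⟨F, ⟨hF, hFlen, hciF, by omega⟩, rfl⟩
  · rintro ⟨F, ⟨hF, hFlen, hciF, hFmin⟩, rfl⟩
    have hFne : F ≠ [] := by rintro rfl; simp at hFlen; omega
    have hFcount := List.count_pos_iff.2 (minPart_mem hFne)
    have hFb : ∀ x ∈ F, a + k < x := fun x hx => by have := minPart_le hF.1 hx; omega
    have hbF : a + k ∉ F := fun h => (hFb _ h).false
    refine ⟨⟨hF.append_replicate (by omega) hFb _, by simp [hFlen], ?_, ?_⟩,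
      minPart_append_replicate F (Nat.succ_ne_zero a) _⟩
    · exact (ciCriterion_append_replicate_iff hF.1 hFne hFb (Nat.succ_ne_zero a)).2
        ⟨hciF, by omega⟩
    · rw [minPart_append_replicate F (Nat.succ_ne_zero a), count_append_replicate_self hbF]
      omega

lemma ciFamily_minPart_eq_replicate {d k : ℕ} (hd : 1 ≤ d) (hk : 1 ≤ k) :
    {P ∈ ciFamily d k | minPart P = d + k - 1} = {List.replicate d (d + k - 1)} := by
  ext P
  constructor
  · rintro ⟨⟨-, hlen, -, hcount⟩, hmin⟩
    rw [hmin] at hcount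
    exact List.eq_replicate_iff.2
      ⟨hlen, fun x hx => (List.count_eq_length.1 (by omega) x hx).symm⟩
  · rintro rfl
    have hrep := minPart_append_replicate [] (by omega : d ≠ 0) (d + k - 1)
    rw [List.nil_append] at hrep
    refine ⟨⟨IsPartitionList.append_replicate (F := []) ⟨by simp, by simp⟩ (by omega)
      (by simp) d, by simp, fun x y hx hy hyx _ => ?_, ?_⟩, hrep⟩
    · rw [List.eq_of_mem_replicate hx, List.eq_of_mem_replicate hy] at hyx
      exact (lt_irrefl _ hyx).elim
    · rw [hrep, List.count_replicate_self]
      omega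

lemma ciFamily_eq_biUnion {d : ℕ} (hd : 1 ≤ d) (k : ℕ) :
    ciFamily d k = ⋃ a ∈ Set.Iio d, {P ∈ ciFamily d k | minPart P = a + k} := by
  ext P
  simp only [Set.mem_iUnion, Set.mem_Iio, Set.mem_sep_iff, exists_prop]
  refine ⟨fun hP => ?_, fun ⟨_, _, hP, _⟩ => hP⟩
  have hlen := hP.2.1
  have hcount := hP.2.2.2
  have hne : P ≠ [] := by rintro rfl; simp at hlen; omega
  have hpos := List.count_pos_iff.2 (minPart_mem hne)
  have hle : P.count (minPart P) ≤ d := hlen ▸ List.count_le_length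
  exact ⟨minPart P - k, by omega, hP, by omega⟩

lemma sum_range_two_pow_sub_add_one (n : ℕ) : ∑ a ∈ range n, 2 ^ (n - 1 - a) + 1 = 2 ^ n := by
  induction n with
  | zero => simp
  | succ n ih =>
    have hshift : ∀ a ∈ range n, 2 ^ (n + 1 - 1 - (a + 1)) = 2 ^ (n - 1 - a) :=
      fun a _ => by congr 1; omega
    rw [sum_range_succ', sum_congr rfl hshift, Nat.add_sub_cancel, Nat.sub_zero, pow_succ]
    omega

theorem encard_ciFamily {d k : ℕ} (hd : 1 ≤ d) (hk : 1 ≤ k) :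
    (ciFamily d k).encard = 2 ^ (d - 1) := by
  induction d using Nat.strong_induction_on generalizing k with
  | _ d ih =>
  obtain ⟨n, rfl⟩ : ∃ n, d = n + 1 := ⟨d - 1, by omega⟩
  have hdisj : (↑(range (n + 1)) : Set ℕ).PairwiseDisjoint
      fun a => {P ∈ ciFamily (n + 1) k | minPart P = a + k} :=
    fun a _ b _ hab => Set.disjoint_left.2 fun _ ha hb =>
      hab (by have := ha.2.symm.trans hb.2; omega)
  have hlower : ∀ a ∈ range n,
      {P ∈ ciFamily (n + 1) k | minPart P = a + k}.encard = 2 ^ (n - 1 - a) := by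
    intro a ha
    rw [mem_range] at ha
    have himg := ciFamily_minPart_eq_image (d := n - a) (a := a) (by omega) hk
    rw [show n - a + (a + 1) = n + 1 by omega] at himg
    rw [himg, (List.append_left_injective _).injOn.encard_image,
      ih (n - a) (by omega) (by omega) (by omega)]
    congr 1; omega
  have htop := ciFamily_minPart_eq_replicate (d := n + 1) (by omega) hk
  rw [show n + 1 + k - 1 = n + k by omega] at htop
  rw [ciFamily_eq_biUnion (by omega), ← coe_range, (finite_toSet _).encard_biUnion hdisj,
    finsum_mem_coe_finset, sum_range_succ, sum_congr rfl hlower, htop, Set.encard_singleton,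
    Nat.add_sub_cancel]
  exact_mod_cast sum_range_two_pow_sub_add_one n

lemma ncard_ciFamily {d k : ℕ} (hd : 1 ≤ d) (hk : 1 ≤ k) :
    (ciFamily d k).ncard = 2 ^ (d - 1) := by
  rw [Set.ncard_def, encard_ciFamily hd hk]
  exact_mod_cast ENat.toNat_natCast (2 ^ (d - 1))

/-- counts of CIJT partitions with `d` parts and given smallest
part. For `0 ≤ a ≤ d-2` there are `2^(d-2-a)` CIJT partitions with `d` parts
and smallest part `a + k`; and the only one with smallest part `d + k - 1` is
the rectangle `(d+k-1)^d`. -/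
theorem stmt_16 (d k : ℕ) (hd : 2 ≤ d) (hk : 1 ≤ k) :
    (∀ a : ℕ, a ≤ d - 2 →
      {P ∈ ciSet d k d | minPart P = a + k}.ncard = 2 ^ (d - 2 - a)) ∧
    {P ∈ ciSet d k d | minPart P = d + k - 1} =
      {List.replicate d (d + k - 1)} := by
  rw [ciSet_eq_ciFamily (by omega) hk]
  refine ⟨fun a ha => ?_, ciFamily_minPart_eq_replicate (by omega) hk⟩
  obtain ⟨n, rfl⟩ : ∃ n, d = n + 1 + (a + 1) := ⟨d - 2 - a, by omega⟩
  rw [ciFamily_minPart_eq_image (by omega) hk,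
    Set.ncard_image_of_injective _ (List.append_left_injective _),
    ncard_ciFamily (by omega) (by omega)]
  congr 1; omega
end

section
/- Let d ≥ 2 and k ≥ 1 be integers, and set D = d if k ≥ 2 and D = d−1 if k = 1. The map sending a partition P = (p_1 ≥ p_2 ≥ …) to the set {i ∈ {0, 1, …, D−1} : p_1 + ⋯ + p_{i+1} = (i+1)(2d+k−2−i)} (parts beyond the length of P taken to be 0) is a bijection from the set of partitions of d(d+k−1) having diagonal lengths T(d,k) and satisfying the CI criterion onto the set of all subsets of {0, 1, …, D−1}; in particular there are exactly 2^D such partitions. -/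
open MvPolynomial

/-!
Grouping equal parts, a partition `(p_1^{n_1}, …, p_t^{n_t})` satisfying the CI criterion is
determined by `V = p_1 + n_1` and the partial sums `s_j = n_1 + ⋯ + n_j`, for the criterion says
exactly that `p_j = V - s_(j-1) - s_j`. The row ends `p_r + r` (rows numbered from `0`) of such
a partition run once through `V - N, …, V - 1`, where `N = s_t` is the number of parts, and
comparing the resulting diagonal lengths with `T(d,k)` forces `V = 2d+k-1` and `N ∈ {d, d+k-1}`.
The sum of the first `m` parts is `m (V - m)` when `m` is one of the `s_j` and smaller otherwise,
so the Hessian set of the partition is `{i < D : i + 1 = s_j for some j}`. Conversely, every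
subset of `{0, …, D-1}` comes from exactly one admissible sequence of partial sums, whose last term
is `d` or `d + k - 1` according as `d - 1` lies in the subset or not.
-/

theorem List.Pairwise.rel_getLastD {α : Type*} {R : α → α → Prop} {a m : α} {l : List α}
    (h : (a :: l).Pairwise R) (hm : m ∈ a :: l) (hne : m ≠ l.getLastD a) : R m (l.getLastD a) := by
  induction l generalizing a with
  | nil => simp_all
  | cons s l ih =>
    rw [List.getLastD_cons] at hne ⊢
    rcases List.mem_cons.1 hm with rfl | hm
    · exact List.rel_of_pairwise_cons h List.getLastD_mem_cons
    · exact ih (List.pairwise_cons.1 h).2 hm hne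

namespace CIJordanType

/-- Rows are numbered from `r`; the rows counted are those meeting the `i`-th diagonal together
with those starting beyond it. -/
def reachCount (i : ℕ) : ℕ → List ℕ → ℕ
  | _, [] => 0
  | r, p :: P => (if i < p + r then 1 else 0) + reachCount i (r + 1) P

lemma reachCount_zero_succ (r : ℕ) (P : List ℕ) : reachCount 0 (r + 1) P = P.length := by
  induction P generalizing r with
  | nil => rfl
  | cons p P ih => rw [reachCount, ih, if_pos (by omega), List.length_cons, add_comm]

lemma reachCount_succ_succ (i r : ℕ) (P : List ℕ) :
    reachCount (i + 1) (r + 1) P = reachCount i r P := by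
  induction P generalizing r with
  | nil => rfl
  | cons p P ih => simp only [reachCount, ih, ← add_assoc, add_lt_add_iff_right]

lemma reachCount_append (i r : ℕ) (P Q : List ℕ) :
    reachCount i r (P ++ Q) = reachCount i r P + reachCount i (r + P.length) Q := by
  induction P generalizing r with
  | nil => simp [reachCount]
  | cons p P ih =>
    rw [List.cons_append, reachCount, reachCount, ih, List.length_cons,
      show r + (P.length + 1) = r + 1 + P.length by omega]
    exact (add_assoc _ _ _).symm

lemma reachCount_replicate (i r n p : ℕ) :
    reachCount i r (List.replicate n p) = n - (i + 1 - (p + r)) := by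
  induction n generalizing r with
  | zero => simp [reachCount]
  | succ n ih =>
    rw [List.replicate_succ, reachCount, ih]
    split_ifs <;> omega

lemma diagLen_cons (p : ℕ) (P : List ℕ) (i : ℕ) :
    diagLen (p :: P) i = (if i < p then 1 else 0) + if i = 0 then 0 else diagLen P (i - 1) := by
  rw [diagLen, Finset.card_filter, Finset.sum_range_succ']
  simp only [List.getD_cons_zero, List.getD_cons_succ, Nat.sub_zero]
  rcases i with _ | i
  · simp
  · simp only [Nat.add_sub_add_right, diagLen, Finset.card_filter, add_tsub_cancel_right,
      Nat.add_one_ne_zero, if_false]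
    exact add_comm _ _

lemma diagLen_add_length_sub (P : List ℕ) (i : ℕ) :
    diagLen P i + (P.length - (i + 1)) = reachCount i 0 P := by
  induction P generalizing i with
  | nil => simp [diagLen, reachCount]
  | cons p P ih =>
    rcases i with _ | i
    · simp [diagLen_cons, reachCount, reachCount_zero_succ]
    · rw [diagLen_cons, reachCount, reachCount_succ_succ, ← ih]
      simp only [List.length_cons, Nat.add_one_ne_zero, if_false, add_tsub_cancel_right, add_zero]
      omega

/-- `l = [s_1, …, s_t]` lists the partial sums of the multiplicities, starting from `s_0 = a`. -/
def blockList (V : ℕ) : ℕ → List ℕ → List ℕ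
  | _, [] => []
  | a, s :: l => List.replicate (s - a) (V - a - s) ++ blockList V s l

/-- The condition making the parts of `blockList V a l` positive and strictly decreasing. -/
def IsBlockSeq (V a : ℕ) (l : List ℕ) : Prop :=
  (a :: l).Pairwise fun x y => x < y ∧ x + y < V

section Blocks

variable {V a s : ℕ} {l : List ℕ}

lemma IsBlockSeq.tail (h : IsBlockSeq V a (s :: l)) : IsBlockSeq V s l :=
  (List.pairwise_cons.1 h).2

lemma IsBlockSeq.head (h : IsBlockSeq V a (s :: l)) : a < s ∧ a + s < V :=
  List.rel_of_pairwise_cons h List.mem_cons_self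

lemma IsBlockSeq.map_add (h : IsBlockSeq V a l) (c : ℕ) :
    IsBlockSeq (V + 2 * c) (a + c) (l.map (· + c)) := by
  change ((a :: l).map (· + c)).Pairwise _
  rw [List.pairwise_map]
  exact h.imp fun hxy => ⟨by omega, by omega⟩

lemma blockList_map_add (V a c : ℕ) (l : List ℕ) :
    blockList (V + 2 * c) (a + c) (l.map (· + c)) = blockList V a l := by
  induction l generalizing a with
  | nil => rfl
  | cons s l ih =>
    rw [List.map_cons, blockList, blockList, ih]
    congr 2 <;> omega

lemma IsBlockSeq.cons_map_add (h : IsBlockSeq V 0 l) {n : ℕ} (hn : 0 < n) :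
    IsBlockSeq (V + 2 * n) 0 (n :: l.map (· + n)) := by
  have hmap := h.map_add n
  rw [zero_add] at hmap
  refine List.pairwise_cons.2 ⟨fun y hy => ?_, hmap⟩
  rcases List.mem_cons.1 hy with rfl | hy
  · omega
  · have := List.rel_of_pairwise_cons hmap hy
    omega

lemma blockList_cons_map_add (V n : ℕ) (l : List ℕ) :
    blockList (V + 2 * n) 0 (n :: l.map (· + n)) = List.replicate n (V + n) ++ blockList V 0 l := by
  have hshift := blockList_map_add V 0 n l
  rw [zero_add] at hshift
  rw [blockList, hshift, show V + 2 * n - 0 - n = V + n by omega, Nat.sub_zero]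

lemma length_blockList (h : IsBlockSeq V a l) : a + (blockList V a l).length = l.getLastD a := by
  induction l generalizing a with
  | nil => simp [blockList]
  | cons s l ih =>
    have := ih h.tail
    have := h.head
    rw [blockList, List.length_append, List.length_replicate, List.getLastD_cons]
    omega

lemma pos_of_mem_blockList (h : IsBlockSeq V a l) {x : ℕ} (hx : x ∈ blockList V a l) :
    0 < x ∧ x + 2 * a < V := by
  induction l generalizing a with
  | nil => simp [blockList] at hx
  | cons s l ih =>
    have := h.head
    rcases List.mem_append.1 hx with hx | hx
    · rw [List.eq_of_mem_replicate hx]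
      omega
    · have := ih h.tail hx
      omega

lemma mem_blockList_cons (h : IsBlockSeq V a (s :: l)) {x : ℕ} :
    x ∈ blockList V a (s :: l) ↔ x = V - a - s ∨ x ∈ blockList V s l := by
  have := h.head
  rw [blockList, List.mem_append, List.mem_replicate]
  constructor
  · rintro (⟨_, rfl⟩ | hx) <;> simp_all
  · rintro (rfl | hx)
    · exact Or.inl ⟨by omega, rfl⟩
    · exact Or.inr hx

lemma lt_of_mem_blockList_tail (h : IsBlockSeq V a (s :: l)) {x : ℕ}
    (hx : x ∈ blockList V s l) : x < V - a - s := by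
  have := h.head
  have := (pos_of_mem_blockList h.tail hx).2
  omega

lemma le_of_mem_blockList_cons (h : IsBlockSeq V a (s :: l)) {x : ℕ}
    (hx : x ∈ blockList V a (s :: l)) : x ≤ V - a - s := by
  rcases (mem_blockList_cons h).1 hx with rfl | hx
  · rfl
  · exact (lt_of_mem_blockList_tail h hx).le

lemma count_blockList_cons (h : IsBlockSeq V a (s :: l)) :
    (blockList V a (s :: l)).count (V - a - s) = s - a := by
  rw [blockList, List.count_append, List.count_replicate_self, List.count_eq_zero.2, add_zero]
  exact fun hx => (lt_of_mem_blockList_tail h hx).false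

lemma count_blockList_cons_of_lt {y : ℕ} (hy : y < V - a - s) :
    (blockList V a (s :: l)).count y = (blockList V s l).count y := by
  rw [blockList, List.count_append, List.count_replicate, if_neg (by simp; omega), zero_add]

lemma pairwise_blockList (h : IsBlockSeq V a l) : (blockList V a l).Pairwise (· ≥ ·) := by
  induction l generalizing a with
  | nil => exact List.Pairwise.nil
  | cons s l ih =>
    rw [blockList, List.pairwise_append]
    refine ⟨List.pairwise_replicate.2 (Or.inr le_rfl), ih h.tail, fun x hx y hy => ?_⟩
    rw [List.eq_of_mem_replicate hx]
    exact (lt_of_mem_blockList_tail h hy).le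

lemma ciCriterion_blockList (h : IsBlockSeq V a l) : CICriterion (blockList V a l) := by
  induction l generalizing a with
  | nil => intro u _ hu; simp [blockList] at hu
  | cons s l ih =>
    intro u v hu hv hvu hgap
    have hvtail : v ∈ blockList V s l := ((mem_blockList_cons h).1 hv).resolve_left
      fun _ => by have := le_of_mem_blockList_cons h hu; omega
    have hvlt := lt_of_mem_blockList_tail h hvtail
    rcases (mem_blockList_cons h).1 hu with rfl | hutail
    · rcases l with _ | ⟨s', l⟩
      · simp [blockList] at hvtail
      have := h.head
      have := h.tail.head
      have hnext : V - s - s' ∈ blockList V a (s :: s' :: l) :=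
        List.mem_append_right _ ((mem_blockList_cons h.tail).2 (Or.inl rfl))
      have hv : v = V - s - s' := le_antisymm (le_of_mem_blockList_cons h.tail hvtail)
        ((hgap _ hnext).resolve_right fun h' => by omega)
      rw [count_blockList_cons h, count_blockList_cons_of_lt hvlt, hv,
        count_blockList_cons h.tail]
      omega
    · have hult := lt_of_mem_blockList_tail h hutail
      rw [count_blockList_cons_of_lt hult, count_blockList_cons_of_lt hvlt]
      exact ih h.tail u v hutail hvtail hvu fun x hx => hgap x (List.mem_append_right _ hx)

-- The row ends `p_r + r` of `blockList V a l` run once through `V - s_t, …, V - a - 1`.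
lemma reachCount_blockList (h : IsBlockSeq V a l) (i : ℕ) :
    reachCount i a (blockList V a l) = min (l.getLastD a - a) (V - 1 - a - i) := by
  induction l generalizing a with
  | nil => simp [blockList, reachCount]
  | cons s l ih =>
    have := h.head
    have := length_blockList h.tail
    rw [blockList, reachCount_append, reachCount_replicate, List.length_replicate,
      show a + (s - a) = s by omega, ih h.tail, List.getLastD_cons]
    omega

lemma mul_sub_add_mul_sub_eq_iff {a m s V : ℕ} (ham : a ≤ m) (hms : m ≤ s) (hV : a + s ≤ V) :
    a * (V - a) + (m - a) * (V - a - s) = m * (V - m) ↔ m = a ∨ m = s := by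
  have key : (m : ℤ) * (V - m) = a * (V - a) + (m - a) * (V - a - s) + (m - a) * (s - m) := by
    ring
  zify [ham, hms, hV, show a ≤ V by omega, show m ≤ V by omega, show s ≤ V - a by omega]
  rw [key, left_eq_add, mul_eq_zero, sub_eq_zero, sub_eq_zero, eq_comm (a := (s : ℤ))]

lemma sum_take_blockList_eq_iff (h : IsBlockSeq V a l) {m : ℕ} (ham : a ≤ m)
    (hm : m ≤ l.getLastD a) :
    a * (V - a) + ((blockList V a l).take (m - a)).sum = m * (V - m) ↔ m ∈ a :: l := by
  induction l generalizing a with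
  | nil =>
    rw [List.getLastD_nil] at hm
    obtain rfl : m = a := le_antisymm hm ham
    simp
  | cons s l ih =>
    have := h.head
    rw [List.getLastD_cons] at hm
    rcases le_or_gt m s with hms | hsm
    · have hml : m ∉ l := fun hml => by
        have := List.rel_of_pairwise_cons h.tail hml
        omega
      rw [blockList, List.take_append_of_le_length (by simp; omega), List.take_replicate,
        List.sum_replicate, min_eq_left (by omega), smul_eq_mul,
        mul_sub_add_mul_sub_eq_iff ham hms (by omega)]
      simp [hml]
    · rw [blockList, List.take_append, List.take_replicate, min_eq_right (by omega),
        List.sum_append, List.sum_replicate, smul_eq_mul, List.length_replicate, ← add_assoc,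
        (mul_sub_add_mul_sub_eq_iff (V := V) this.1.le le_rfl (by omega)).2 (Or.inr rfl),
        show m - a - (s - a) = m - s by omega, ih h.tail hsm.le hm]
      simp [show m ≠ a by omega]

lemma sum_blockList (h : IsBlockSeq V 0 l) :
    (blockList V 0 l).sum = l.getLastD 0 * (V - l.getLastD 0) := by
  have hlen := length_blockList h
  rw [zero_add] at hlen
  have := (sum_take_blockList_eq_iff h (Nat.zero_le _) le_rfl).2 List.getLastD_mem_cons
  rwa [zero_mul, zero_add, Nat.sub_zero, ← hlen, List.take_length, hlen] at this

end Blocks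

lemma exists_replicate_append {a : ℕ} {P : List ℕ} (hP : (a :: P).Pairwise (· ≥ ·)) :
    ∃ n Q, 0 < n ∧ a :: P = List.replicate n a ++ Q ∧ ∀ x ∈ Q, x < a := by
  induction P with
  | nil => exact ⟨1, [], one_pos, rfl, by simp⟩
  | cons b P ih =>
    have hba : b ≤ a := List.rel_of_pairwise_cons hP List.mem_cons_self
    rcases hba.eq_or_lt with rfl | hba
    · obtain ⟨n, Q, hn, hPQ, hQ⟩ := ih (List.pairwise_cons.1 hP).2
      exact ⟨n + 1, Q, n.succ_pos, by rw [hPQ, List.replicate_succ, List.cons_append], hQ⟩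
    · refine ⟨1, b :: P, one_pos, rfl, fun x hx => ?_⟩
      rcases List.mem_cons.1 hx with rfl | hx
      · exact hba
      · exact lt_of_le_of_lt (List.rel_of_pairwise_cons (List.pairwise_cons.1 hP).2 hx) hba

lemma CICriterion.of_replicate_append {n a : ℕ} {Q : List ℕ}
    (h : CICriterion (List.replicate n a ++ Q)) (hQ : ∀ x ∈ Q, x < a) : CICriterion Q := by
  have hcount : ∀ x ∈ Q, (List.replicate n a ++ Q).count x = Q.count x := fun x hx => by
    rw [List.count_append, List.count_replicate, if_neg (by have := hQ x hx; simp; omega),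
      zero_add]
  intro u v hu hv hvu hgap
  rw [← hcount u hu, ← hcount v hv]
  refine h u v (List.mem_append_right _ hu) (List.mem_append_right _ hv) hvu fun x hx => ?_
  rcases List.mem_append.1 hx with hx | hx
  · exact Or.inr ((List.eq_of_mem_replicate hx).symm ▸ (hQ u hu).le)
  · exact hgap x hx

theorem exists_blockList_eq {P : List ℕ} (hP : IsPartitionList P) (hci : CICriterion P) :
    ∃ V l, IsBlockSeq V 0 l ∧ blockList V 0 l = P := by
  induction hlen : P.length using Nat.strong_induction_on generalizing P with
  | _ N ih =>
  rcases P with _ | ⟨a, P⟩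
  · exact ⟨0, [], List.pairwise_singleton _ _, rfl⟩
  obtain ⟨n, Q, hn, hPQ, hQa⟩ := exists_replicate_append hP.1
  rw [hPQ] at hP hci hlen ⊢
  have hQ : IsPartitionList Q :=
    ⟨(List.pairwise_append.1 hP.1).2.1, fun x hx => hP.2 x (List.mem_append_right _ hx)⟩
  obtain ⟨V, l, hl, rfl⟩ :=
    ih Q.length (by simp at hlen; omega) hQ (CICriterion.of_replicate_append hci hQa) rfl
  have haP : a ∈ List.replicate n a ++ blockList V 0 l :=
    List.mem_append_left _ (List.mem_replicate.2 ⟨hn.ne', rfl⟩)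
  rcases l with _ | ⟨m, l⟩
  · have ha := hP.2 a haP
    exact ⟨a + n, [n], List.pairwise_pair.2 ⟨hn, by omega⟩, by simp [blockList]⟩
  have hm := hl.head
  have hhead : V - m ∈ blockList V 0 (m :: l) := (mem_blockList_cons hl).2 (Or.inl rfl)
  have hgap : ∀ x ∈ List.replicate n a ++ blockList V 0 (m :: l), x ≤ V - m ∨ a ≤ x := by
    intro x hx
    rcases List.mem_append.1 hx with hx | hx
    · exact Or.inr (List.eq_of_mem_replicate hx).ge
    · exact Or.inl (by simpa using le_of_mem_blockList_cons hl hx)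
  have hcount := count_blockList_cons hl
  rw [Nat.sub_zero, Nat.sub_zero] at hcount
  -- The CI criterion for the two largest part sizes `a > V - m` reads `a = n + V`.
  have hci_top := hci a (V - m) haP (List.mem_append_right _ hhead) (hQa _ hhead) hgap
  rw [List.count_append, List.count_replicate_self,
    List.count_eq_zero.2 fun h => (hQa a h).false, List.count_append,
    List.count_replicate, if_neg (by have := hQa _ hhead; simp; omega), hcount]
    at hci_top
  exact ⟨V + 2 * n, n :: (m :: l).map (· + n), hl.cons_map_add hn,
    by rw [blockList_cons_map_add, show V + n = a by omega]⟩

section Classification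

def ciPartitions (d k : ℕ) : Set (List ℕ) :=
  {P | IsPartitionList P ∧ P.sum = d * (d + k - 1) ∧ (∀ i, diagLen P i = Tdk d k i) ∧
    CICriterion P}

def blockSeqs (d k : ℕ) : Set (List ℕ) :=
  {l | IsBlockSeq (2 * d + k - 1) 0 l ∧ (l.getLastD 0 = d ∨ l.getLastD 0 = d + k - 1)}

def hessianSet (d k D : ℕ) (P : List ℕ) : Set ℕ :=
  {i | i < D ∧ (P.take (i + 1)).sum = (i + 1) * (2 * d + k - 2 - i)}

def cutSet (D : ℕ) (l : List ℕ) : Set ℕ := {i | i < D ∧ i + 1 ∈ l}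

variable {d k : ℕ}

lemma Tdk_sub_one (hd : 2 ≤ d) (hk : 1 ≤ k) : Tdk d k (d - 1) = d := by
  rw [Tdk, if_pos (by omega)]
  omega

lemma Tdk_add_eq_min_iff (hd : 2 ≤ d) (hk : 1 ≤ k) (N V : ℕ) :
    (∀ i, Tdk d k i + (N - (i + 1)) = min N (V - 1 - i)) ↔
      V = 2 * d + k - 1 ∧ (N = d ∨ N = d + k - 1) := by
  constructor
  · intro h
    have hNV : d ≤ N ∧ N + d ≤ V := by
      have := h (d - 1)
      rw [Tdk_sub_one hd hk] at this
      omega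
    have hV : V = 2 * d + k - 1 := by
      have hlast := h (V - 1)
      have hnext := h (V - 2)
      rw [Tdk] at hlast hnext
      split_ifs at hlast hnext <;> omega
    refine ⟨hV, ?_⟩
    have := h (N - 1)
    rw [Tdk] at this
    split_ifs at this <;> omega
  · rintro ⟨rfl, hN⟩ i
    rw [Tdk]
    rcases hN with rfl | rfl <;> split_ifs <;> omega

lemma diagLen_blockList_add {V : ℕ} {l : List ℕ} (h : IsBlockSeq V 0 l) (i : ℕ) :
    diagLen (blockList V 0 l) i + (l.getLastD 0 - (i + 1)) =
      min (l.getLastD 0) (V - 1 - i) := by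
  have hlen := length_blockList h
  rw [zero_add] at hlen
  rw [← hlen, diagLen_add_length_sub, reachCount_blockList h, hlen, Nat.sub_zero, Nat.sub_zero]

theorem ciPartitions_eq_image (hd : 2 ≤ d) (hk : 1 ≤ k) :
    ciPartitions d k = blockList (2 * d + k - 1) 0 '' blockSeqs d k := by
  ext P
  constructor
  · rintro ⟨hP, -, hdiag, hci⟩
    obtain ⟨V, l, hl, rfl⟩ := exists_blockList_eq hP hci
    obtain ⟨rfl, hN⟩ := (Tdk_add_eq_min_iff hd hk _ V).1 fun i => by
      rw [← hdiag i]
      exact diagLen_blockList_add hl i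
    exact ⟨l, ⟨hl, hN⟩, rfl⟩
  · rintro ⟨l, ⟨hl, hN⟩, rfl⟩
    have hT := (Tdk_add_eq_min_iff hd hk _ _).2 ⟨rfl, hN⟩
    refine ⟨⟨pairwise_blockList hl, fun x hx => (pos_of_mem_blockList hl hx).1⟩, ?_,
      fun i => ?_, ciCriterion_blockList hl⟩
    · rw [sum_blockList hl]
      rcases hN with hN | hN <;> rw [hN]
      · rw [show 2 * d + k - 1 - d = d + k - 1 by omega]
      · rw [show 2 * d + k - 1 - (d + k - 1) = d by omega, mul_comm]
    · have := diagLen_blockList_add hl i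
      have := hT i
      omega

lemma hessianSet_blockList (hk : 1 ≤ k) {D : ℕ} (hDd : D ≤ d) {l : List ℕ}
    (hl : l ∈ blockSeqs d k) :
    hessianSet d k D (blockList (2 * d + k - 1) 0 l) = cutSet D l := by
  ext i
  simp only [hessianSet, cutSet, Set.mem_ofPred_eq, and_congr_right_iff]
  intro hi
  have hlast : i + 1 ≤ l.getLastD 0 := by rcases hl.2 with h | h <;> omega
  have := sum_take_blockList_eq_iff hl.1 (Nat.zero_le _) hlast
  rw [zero_mul, zero_add, Nat.sub_zero, show 2 * d + k - 1 - (i + 1) = 2 * d + k - 2 - i by omega]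
    at this
  rw [this, List.mem_cons, or_iff_right (by omega)]

open Classical in
noncomputable def blockSeqOf (d k : ℕ) (s : Set ℕ) : List ℕ :=
  ((List.range (d - 1)).filter (· ∈ s)).map (· + 1) ++ [if d - 1 ∈ s then d else d + k - 1]

lemma mem_blockSeqOf {s : Set ℕ} {m : ℕ} :
    m ∈ blockSeqOf d k s ↔ (0 < m ∧ m < d ∧ m - 1 ∈ s) ∨ (m = d ∧ d - 1 ∈ s) ∨
      (m = d + k - 1 ∧ d - 1 ∉ s) := by
  simp only [blockSeqOf, List.mem_append, List.mem_map, List.mem_filter, List.mem_range,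
    decide_eq_true_eq, List.mem_singleton]
  constructor
  · rintro (⟨i, ⟨hi, his⟩, rfl⟩ | h)
    · exact Or.inl ⟨by omega, by omega, by simpa using his⟩
    · split_ifs at h with hs
      · exact Or.inr (Or.inl ⟨h, hs⟩)
      · exact Or.inr (Or.inr ⟨h, hs⟩)
  · rintro (⟨h0, hmd, hs⟩ | ⟨rfl, hs⟩ | ⟨rfl, hs⟩)
    · exact Or.inl ⟨m - 1, ⟨by omega, hs⟩, by omega⟩
    · exact Or.inr (if_pos hs).symm
    · exact Or.inr (if_neg hs).symm

lemma pairwise_blockSeqOf (hd : 0 < d) (hk : 1 ≤ k) (s : Set ℕ) :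
    (0 :: blockSeqOf d k s).Pairwise (· < ·) := by
  rw [blockSeqOf, ← List.cons_append, List.pairwise_append]
  refine ⟨List.pairwise_cons.2 ⟨fun y hy => ?_, ?_⟩, List.pairwise_singleton _ _,
    fun x hx y hy => ?_⟩
  · obtain ⟨i, -, rfl⟩ := List.mem_map.1 hy
    omega
  · exact List.pairwise_map.2 ((List.pairwise_lt_range.filter _).imp (by omega))
  · rw [List.mem_singleton] at hy
    subst hy
    rcases List.mem_cons.1 hx with rfl | hx
    · split_ifs <;> omega
    · obtain ⟨i, hi, rfl⟩ := List.mem_map.1 hx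
      rw [List.mem_filter, List.mem_range] at hi
      split_ifs <;> omega

lemma blockSeqOf_mem_blockSeqs (hd : 0 < d) (hk : 1 ≤ k) (s : Set ℕ) :
    blockSeqOf d k s ∈ blockSeqs d k := by
  refine ⟨(pairwise_blockSeqOf hd hk s).imp_of_mem fun {x y} hx hy hxy => ⟨hxy, ?_⟩, ?_⟩
  · rw [List.mem_cons, mem_blockSeqOf] at hx hy
    rcases hx with rfl | ⟨-, hx, -⟩ | ⟨rfl, hs⟩ | ⟨rfl, hs⟩ <;>
      rcases hy with rfl | ⟨-, hy, -⟩ | ⟨rfl, hs'⟩ | ⟨rfl, hs'⟩ <;>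
      first | omega | contradiction
  · rw [blockSeqOf, List.getLastD_concat]
    split_ifs <;> simp

lemma blockSeqOf_cutSet (hd : 2 ≤ d) (hk : 1 ≤ k) {D : ℕ}
    (hD : D = if 2 ≤ k then d else d - 1) {l : List ℕ} (hl : l ∈ blockSeqs d k) :
    blockSeqOf d k (cutSet D l) = l := by
  obtain ⟨hl, hN⟩ := hl
  have hNl : l.getLastD 0 ∈ l :=
    (List.mem_cons.1 List.getLastD_mem_cons).resolve_left (by omega)
  have hlow : ∀ m ∈ l, m ≠ l.getLastD 0 → 0 < m ∧ m < d := fun m hm hmN => by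
    have := hl.rel_getLastD (List.mem_cons_of_mem _ hm) hmN
    have := List.rel_of_pairwise_cons hl hm
    omega
  have hdl : d ∈ l ↔ l.getLastD 0 = d :=
    ⟨fun h => by_contra fun hne => (hlow d h (Ne.symm hne)).2.false, fun h => h ▸ hNl⟩
  have hDk : d - 1 < D ↔ 2 ≤ k := by rw [hD]; split_ifs <;> omega
  have hDd : d - 1 ≤ D := by rw [hD]; split_ifs <;> omega
  refine (pairwise_blockSeqOf (by omega) hk _).of_cons.eq_of_mem_iff
    ((List.pairwise_cons.1 hl).2.imp And.left) fun m => ?_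
  simp only [mem_blockSeqOf, cutSet, Set.mem_ofPred_eq, Nat.sub_add_cancel (by omega : 1 ≤ d),
    hdl, hDk]
  constructor
  · rintro (⟨h0, -, -, hm⟩ | ⟨rfl, -, hN'⟩ | ⟨rfl, hnot⟩)
    · rwa [Nat.sub_add_cancel h0] at hm
    · exact hdl.2 hN'
    · rwa [show d + k - 1 = l.getLastD 0 by omega]
  · intro hm
    by_cases hmN : m = l.getLastD 0
    · exact Or.inr (by omega)
    · obtain ⟨h0, hmd⟩ := hlow m hm hmN
      exact Or.inl ⟨h0, hmd, by omega, by rwa [Nat.sub_add_cancel h0]⟩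

lemma cutSet_blockSeqOf (hd : 0 < d) (hk : 1 ≤ k) {D : ℕ} (hD : D = if 2 ≤ k then d else d - 1)
    {s : Set ℕ} (hs : ∀ i ∈ s, i < D) :
    cutSet D (blockSeqOf d k s) = s := by
  have hDd : D ≤ d ∧ d - 1 ≤ D ∧ (d - 1 < D ↔ 2 ≤ k) := by rw [hD]; split_ifs <;> omega
  ext i
  simp only [cutSet, Set.mem_ofPred_eq, mem_blockSeqOf, Nat.add_sub_cancel]
  constructor
  · rintro ⟨hi, ⟨-, -, his⟩ | ⟨hid, hs'⟩ | ⟨hid, -⟩⟩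
    · exact his
    · rwa [show i = d - 1 by omega]
    · omega
  · intro his
    have hi := hs i his
    refine ⟨hi, ?_⟩
    by_cases hid : i + 1 < d
    · exact Or.inl ⟨by omega, hid, his⟩
    · obtain rfl : i = d - 1 := by omega
      exact Or.inr (Or.inl ⟨by omega, his⟩)

theorem bijOn_cutSet (hd : 2 ≤ d) (hk : 1 ≤ k) {D : ℕ} (hD : D = if 2 ≤ k then d else d - 1) :
    Set.BijOn (cutSet D) (blockSeqs d k) {s | ∀ i ∈ s, i < D} :=
  Set.InvOn.bijOn
    ⟨fun _ hl => blockSeqOf_cutSet hd hk hD hl, fun _ hs => cutSet_blockSeqOf (by omega) hk hD hs⟩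
    (fun _ _ _ hi => hi.1) fun s _ => blockSeqOf_mem_blockSeqs (by omega) hk s

end Classification

end CIJordanType

open CIJordanType in
/-- CIJT partitions ↔ subsets of active Hessians. The map
sending a CIJT partition `P` of diagonal lengths `T(d,k)` to its set of
nonvanishing Hessian indices `{i < D : p_1 + ⋯ + p_(i+1) = (i+1)(2d+k-2-i)}`
(`D = d` if `k ≥ 2`, `D = d-1` if `k = 1`) is a bijection onto the subsets of
`{0, …, D-1}`; in particular there are `2^D` such partitions. -/
theorem stmt_18 (d k : ℕ) (hd : 2 ≤ d) (hk : 1 ≤ k)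
    (D : ℕ) (hD : D = if 2 ≤ k then d else d - 1) :
    Set.BijOn
      (fun P : List ℕ =>
        {i : ℕ | i < D ∧ (P.take (i + 1)).sum = (i + 1) * (2 * d + k - 2 - i)})
      {P : List ℕ | IsPartitionList P ∧ P.sum = d * (d + k - 1) ∧
        (∀ i : ℕ, diagLen P i = Tdk d k i) ∧ CICriterion P}
      {s : Set ℕ | ∀ i ∈ s, i < D} ∧
    {P : List ℕ | IsPartitionList P ∧ P.sum = d * (d + k - 1) ∧
        (∀ i : ℕ, diagLen P i = Tdk d k i) ∧ CICriterion P}.ncard = 2 ^ D := by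
  have hDd : D ≤ d := by rw [hD]; split_ifs <;> omega
  have hcut : Set.BijOn (hessianSet d k D ∘ blockList (2 * d + k - 1) 0) (blockSeqs d k)
      {s | ∀ i ∈ s, i < D} :=
    (bijOn_cutSet hd hk hD).congr fun l hl => (hessianSet_blockList hk hDd hl).symm
  have hbij : Set.BijOn (hessianSet d k D) (ciPartitions d k) {s | ∀ i ∈ s, i < D} := by
    rw [ciPartitions_eq_image hd hk, ← Set.bijOn_comp_iff hcut.injOn.of_comp]
    exact hcut
  refine ⟨hbij, ?_⟩
  change (ciPartitions d k).ncard = 2 ^ D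
  rw [hbij.ncard_eq]
  change (𝒫 Set.Iio D).ncard = 2 ^ D
  rw [Set.ncard_powerset _ (Set.finite_Iio D), Set.ncard_Iio_nat]
end
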